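/- arXiv:2402.10154 — 6 statements merged into one kernel-verified Lean document; each statement's English description precedes it below -/
import Mathlib

section
/- Let d ≥ 1, T ∈ (0,∞], and let u : [0,T) × ℝ^d → ℝ be a real-valued bounded classical solution of ∂_t u = Δu + ζ(u) with bounded continuous real-valued initial datum g satisfying inf_x |g(x) − 1| > 0. Set I = inf_x g(x) and S = sup_x g(x), assume I > 1, and assume u(t,x) > 1 for all (t,x) ∈ [0,T) × ℝ^d. Then for all (t,x) ∈ [0,T) × ℝ^d: t + I ≤ u(t,x) ≤ ζ(I)·t + S. -/
open MeasureTheory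
open scoped ENNReal
open Filter Topology

noncomputable section

/-- A bounded classical solution of `∂ₜ u = Δu + F(u)` (real-valued) on `[0,T)`. -/
def IsHeatSolutionR (d : ℕ) (F : ℝ → ℝ) (T : ℝ≥0∞)
    (g : EuclideanSpace ℝ (Fin d) → ℝ) (u : ℝ → EuclideanSpace ℝ (Fin d) → ℝ) : Prop :=
  ContinuousOn (fun p : ℝ × EuclideanSpace ℝ (Fin d) => u p.1 p.2)
      {p | 0 ≤ p.1 ∧ ENNReal.ofReal p.1 < T} ∧
  (∀ x, u 0 x = g x) ∧
  (∀ t' : ℝ, ENNReal.ofReal t' < T → ∃ C : ℝ, ∀ t x, 0 ≤ t → t ≤ t' → |u t x| ≤ C) ∧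
  ∃ (ut : ℝ → EuclideanSpace ℝ (Fin d) → ℝ)
    (ux uxx : ℝ → EuclideanSpace ℝ (Fin d) → Fin d → ℝ),
    (∀ t x, 0 < t → ENNReal.ofReal t < T → HasDerivAt (fun τ => u τ x) (ut t x) t) ∧
    (∀ t x i, 0 < t → ENNReal.ofReal t < T →
      HasDerivAt (fun s : ℝ => u t (x + s • EuclideanSpace.single i (1:ℝ))) (ux t x i) 0) ∧
    (∀ t x i, 0 < t → ENNReal.ofReal t < T →
      HasDerivAt (fun s : ℝ => ux t (x + s • EuclideanSpace.single i (1:ℝ)) i) (uxx t x i) 0) ∧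
    ContinuousOn (fun p : ℝ × EuclideanSpace ℝ (Fin d) => ut p.1 p.2)
      {p | 0 < p.1 ∧ ENNReal.ofReal p.1 < T} ∧
    (∀ i, ContinuousOn (fun p : ℝ × EuclideanSpace ℝ (Fin d) => uxx p.1 p.2 i)
      {p | 0 < p.1 ∧ ENNReal.ofReal p.1 < T}) ∧
    (∀ t x, 0 < t → ENNReal.ofReal t < T → ut t x = (∑ i, uxx t x i) + F (u t x))

/-- The real value `ζ(x) = Re (riemannZeta x)` of the Riemann zeta function at a real point. -/
def zetaR (x : ℝ) : ℝ := (riemannZeta (x : ℂ)).re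

lemma zsummable {x : ℝ} (hx : 1 < x) : Summable (fun n : ℕ => 1 / ((n : ℝ) + 1) ^ x) := by
  have h0 : Summable (fun n : ℕ => 1 / (n : ℝ) ^ x) := Real.summable_one_div_nat_rpow.mpr hx
  have := (summable_nat_add_iff (f := fun n : ℕ => 1 / (n : ℝ) ^ x) 1).mpr h0
  simpa using this

lemma complex_term_eq {x : ℝ} (n : ℕ) :
    1 / ((n : ℂ) + 1) ^ (x : ℂ) = ((1 / ((n : ℝ) + 1) ^ x : ℝ) : ℂ) := by
  have h1 : ((n:ℂ)+1) = (((n:ℝ)+1 : ℝ) : ℂ) := by push_cast; ring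
  rw [h1, ← Complex.ofReal_cpow (by positivity), ← Complex.ofReal_one, ← Complex.ofReal_div]

lemma zetaR_eq {x : ℝ} (hx : 1 < x) : zetaR x = ∑' n : ℕ, 1 / ((n : ℝ) + 1) ^ x := by
  have h : (1:ℝ) < (x:ℂ).re := by simpa using hx
  rw [zetaR, zeta_eq_tsum_one_div_nat_add_one_cpow h]
  have hsum : Summable (fun n : ℕ => 1 / ((n : ℂ) + 1) ^ (x:ℂ)) := by
    simp only [complex_term_eq]
    exact (Complex.summable_ofReal).mpr (zsummable hx)
  rw [Complex.re_tsum hsum]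
  congr 1; ext n; rw [complex_term_eq, Complex.ofReal_re]

lemma one_lt_zetaR {x : ℝ} (hx : 1 < x) : 1 < zetaR x := by
  rw [zetaR_eq hx]
  have hsum := zsummable hx
  have h01 : Summable (fun n : ℕ => if n = 0 then (1:ℝ) else 0) := by
    apply summable_of_ne_finset_zero (s := {0}); intro n hn; simp at hn ⊢; exact hn
  have hlt : ∑' n : ℕ, (if n = 0 then (1:ℝ) else 0) < ∑' n : ℕ, 1 / ((n : ℝ) + 1) ^ x := by
    apply Summable.tsum_lt_tsum (i := 1) _ _ h01 hsum
    · intro n; by_cases h : n = 0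
      · subst h; simp [Real.one_rpow]
      · simp [h]; positivity
    · simp; positivity
  calc (1:ℝ) = ∑' n : ℕ, (if n = 0 then (1:ℝ) else 0) := by rw [tsum_ite_eq]
    _ < _ := hlt

lemma zetaR_lt_zetaR {a b : ℝ} (ha : 1 < a) (hab : a < b) : zetaR b < zetaR a := by
  rw [zetaR_eq ha, zetaR_eq (lt_trans ha hab)]
  apply Summable.tsum_lt_tsum (i := 1) ?_ ?_ (zsummable (lt_trans ha hab)) (zsummable ha)
  · intro n
    apply div_le_div_of_nonneg_left one_pos.le (by positivity)
    exact Real.rpow_le_rpow_of_exponent_le (by push_cast; linarith [Nat.cast_nonneg (α := ℝ) n]) hab.le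
  · apply div_lt_div_of_pos_left one_pos (by positivity)
    exact Real.rpow_lt_rpow_of_exponent_lt (by norm_num) hab


/-- derivative at 0 of the eventual derivative of a function with a local min at 0 is ≥ 0. -/
lemma second_deriv_test {f g : ℝ → ℝ} {a : ℝ}
    (hmin : IsLocalMin f 0)
    (hfg : ∀ᶠ σ in 𝓝 (0:ℝ), HasDerivAt f (g σ) σ)
    (hg : HasDerivAt g a 0) : 0 ≤ a := by
  by_contra hneg
  push_neg at hneg
  have hg0 : g 0 = 0 := by
    have hf0 : HasDerivAt f (g 0) 0 := hfg.self_of_nhds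
    have : deriv f 0 = 0 := hmin.deriv_eq_zero
    rw [← hf0.deriv]; exact this
  -- g σ < 0 for small σ > 0
  have hsl := hasDerivAt_iff_tendsto_slope.mp hg
  have hev : ∀ᶠ σ in 𝓝[≠] (0:ℝ), slope g 0 σ < a / 2 :=
    hsl.eventually (Filter.Tendsto.eventually_lt_const (by linarith) tendsto_id)
  -- get δ
  obtain ⟨δ1, hδ1pos, hδ1'⟩ := Metric.mem_nhdsWithin_iff.mp hev
  have hδ1 : ∀ σ : ℝ, σ ≠ 0 → |σ| < δ1 → slope g 0 σ < a / 2 := fun σ hne habs =>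
    hδ1' ⟨by simpa [Real.dist_eq] using habs, hne⟩
  obtain ⟨δ2, hδ2pos, hδ2'⟩ := Metric.eventually_nhds_iff.mp hfg
  have hδ2 : ∀ σ : ℝ, |σ| < δ2 → HasDerivAt f (g σ) σ := fun σ habs =>
    hδ2' (by simpa [Real.dist_eq] using habs)
  obtain ⟨δ3, hδ3pos, hδ3'⟩ := Metric.eventually_nhds_iff.mp hmin
  have hδ3 : ∀ σ : ℝ, |σ| < δ3 → f 0 ≤ f σ := fun σ habs =>
    hδ3' (by simpa [Real.dist_eq] using habs)
  set δ := min δ1 (min δ2 δ3) with hδ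
  have hδpos : 0 < δ := by positivity
  have hgneg : ∀ σ ∈ Set.Ioo (0:ℝ) δ, g σ < 0 := by
    intro σ hσ
    have h1 : slope g 0 σ < a / 2 := by
      apply hδ1 _ (ne_of_gt hσ.1)
      rw [abs_of_pos hσ.1]
      exact lt_of_lt_of_le hσ.2 (min_le_left _ _)
    rw [slope_def_field, hg0, sub_zero, sub_zero, div_lt_iff₀ hσ.1] at h1
    nlinarith [hσ.1]
  -- f strict anti on [0, δ)
  have hanti : StrictAntiOn f (Set.Icc 0 (δ/2)) := by
    apply strictAntiOn_of_deriv_neg (convex_Icc _ _)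
    · apply ContinuousOn.mono (s := Set.Icc 0 (δ/2)) ?_ le_rfl
      intro σ hσ
      have : HasDerivAt f (g σ) σ := by
        apply hδ2
        simp only [Set.mem_Icc] at hσ
        rw [abs_of_nonneg hσ.1]
        calc σ ≤ δ/2 := hσ.2
          _ < δ := by linarith
          _ ≤ δ2 := le_trans (min_le_right _ _) (min_le_left _ _)
      exact this.continuousAt.continuousWithinAt
    · intro σ hσ
      rw [interior_Icc] at hσ
      have hd : HasDerivAt f (g σ) σ := by
        apply hδ2
        rw [abs_of_nonneg hσ.1.le]
        calc σ < δ/2 := hσ.2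
          _ < δ := by linarith
          _ ≤ δ2 := le_trans (min_le_right _ _) (min_le_left _ _)
      rw [hd.deriv]
      exact hgneg σ ⟨hσ.1, by linarith [hσ.2]⟩
  have h4 : f (δ/2) < f 0 := hanti (by constructor <;> [norm_num; positivity]) (by constructor <;> [positivity; norm_num]) (by positivity)
  have h5 : f 0 ≤ f (δ/2) := by
    apply hδ3
    rw [abs_of_pos (by positivity : (0:ℝ) < δ/2)]
    calc δ/2 < δ := by linarith
      _ ≤ δ3 := le_trans (min_le_right _ _) (min_le_right _ _)
  linarith

/-- if h has a min at right endpoint b over [a,b] and derivative c at b then c ≤ 0. -/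
lemma deriv_nonpos_right {h : ℝ → ℝ} {a b c : ℝ} (hab : a < b)
    (hmin : ∀ t, a ≤ t → t ≤ b → h b ≤ h t)
    (hd : HasDerivAt h c b) : c ≤ 0 := by
  have hsl := hasDerivAt_iff_tendsto_slope.mp hd
  have hsl' : Tendsto (slope h b) (𝓝[<] b) (𝓝 c) :=
    hsl.mono_left (nhdsWithin_mono _ (fun t ht => ne_of_lt ht))
  have hne : (𝓝[<] b).NeBot := inferInstance
  apply le_of_tendsto hsl'
  filter_upwards [Ioo_mem_nhdsLT_of_mem ⟨hab, le_refl b⟩] with t ht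
  rw [slope_def_field]
  apply div_nonpos_of_nonneg_of_nonpos
  · linarith [hmin t ht.1.le ht.2.le]
  · linarith [ht.2]

lemma min_principle {d : ℕ} (t0 : ℝ) (ht0 : 0 < t0)
    (v vt : ℝ → EuclideanSpace ℝ (Fin d) → ℝ)
    (vx vxx : ℝ → EuclideanSpace ℝ (Fin d) → Fin d → ℝ)
    (hc : ContinuousOn (fun p : ℝ × EuclideanSpace ℝ (Fin d) => v p.1 p.2)
      {p | 0 ≤ p.1 ∧ p.1 ≤ t0})
    (hb : ∃ C, ∀ t x, 0 ≤ t → t ≤ t0 → |v t x| ≤ C)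
    (hvt : ∀ t x, 0 < t → t ≤ t0 → HasDerivAt (fun τ => v τ x) (vt t x) t)
    (hvx : ∀ t x i, 0 < t → t ≤ t0 →
      HasDerivAt (fun s : ℝ => v t (x + s • EuclideanSpace.single i (1:ℝ))) (vx t x i) 0)
    (hvxx : ∀ t x i, 0 < t → t ≤ t0 →
      HasDerivAt (fun s : ℝ => vx t (x + s • EuclideanSpace.single i (1:ℝ)) i) (vxx t x i) 0)
    (hstrict : ∀ t x, 0 < t → t ≤ t0 → (∑ i, vxx t x i) < vt t x)
    (h0 : ∀ x, 0 ≤ v 0 x) (x0 : EuclideanSpace ℝ (Fin d)) :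
    0 ≤ v t0 x0 := by
  by_contra hneg
  push_neg at hneg
  set m := v t0 x0 with hm
  obtain ⟨C, hC⟩ := hb
  have hC0 : 0 ≤ C := le_trans (abs_nonneg _) (hC 0 x0 le_rfl ht0.le)
  set ε : ℝ := -m / (2 * (2 * d * t0 + 1)) with hε
  have hd0 : (0:ℝ) ≤ 2 * d * t0 := by positivity
  have hεpos : 0 < ε := by
    apply div_pos (by linarith) (by linarith)
  set W : ℝ → EuclideanSpace ℝ (Fin d) → ℝ :=
    fun t x => v t x + ε * (‖x - x0‖ ^ 2 + 2 * d * t) with hW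
  set R : ℝ := Real.sqrt ((C + 1) / ε) with hR
  have hRsq : ε * R ^ 2 = C + 1 := by
    rw [hR, Real.sq_sqrt (by positivity)]
    field_simp
  have hRpos : 0 < R := by
    rw [hR]; positivity
  set K : Set (ℝ × EuclideanSpace ℝ (Fin d)) :=
    Set.Icc (0:ℝ) t0 ×ˢ Metric.closedBall x0 R with hK
  have hKc : IsCompact K := (isCompact_Icc).prod (isCompact_closedBall _ _)
  have hx0K : (t0, x0) ∈ K := by
    constructor
    · exact ⟨ht0.le, le_rfl⟩
    · simp [hRpos.le]
  have hWc : ContinuousOn (fun p : ℝ × EuclideanSpace ℝ (Fin d) => W p.1 p.2) K := by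
    apply ContinuousOn.add
    · apply hc.mono
      rintro ⟨t, x⟩ ⟨⟨h1, h2⟩, _⟩
      exact ⟨h1, h2⟩
    · exact (Continuous.continuousOn (by fun_prop))
  obtain ⟨⟨s, y⟩, hpK, hpmin⟩ := hKc.exists_isMinOn ⟨(t0, x0), hx0K⟩ hWc
  rw [isMinOn_iff] at hpmin
  have hsIcc : s ∈ Set.Icc (0:ℝ) t0 := hpK.1
  have hyB : y ∈ Metric.closedBall x0 R := hpK.2
  have hyR' : ‖y - x0‖ ≤ R := by
    rw [Metric.mem_closedBall, dist_eq_norm] at hyB; exact hyB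
  clear_value m ε W R K
  have hWt0x0 : W t0 x0 ≤ m / 2 := by
    have h1 : W t0 x0 = m + ε * (2 * d * t0) := by
      simp [hW, hm]
    have h2 : ε * (2 * d * t0) ≤ -m / 2 := by
      rw [hε, div_mul_eq_mul_div, div_le_div_iff₀ (by linarith) (by norm_num)]
      nlinarith
    linarith
  have hWsy : W s y ≤ m / 2 := le_trans (hpmin (t0, x0) hx0K) hWt0x0
  have hWsyneg : W s y < 0 := lt_of_le_of_lt hWsy (by linarith)
  -- s > 0
  have hs0 : 0 < s := by
    rcases lt_or_eq_of_le hsIcc.1 with h | h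
    · exact h
    · exfalso
      have : W 0 y = v 0 y + ε * ‖y - x0‖ ^ 2 := by simp [hW]
      have h2 : 0 ≤ W 0 y := by
        rw [this]
        have := h0 y
        positivity
      have h3 : 0 ≤ W s y := by rw [← h]; exact h2
      linarith
  -- y interior
  have hyR : ‖y - x0‖ < R := by
    rcases lt_or_eq_of_le hyR' with h | h
    · exact h
    · exfalso
      have h1 : -C ≤ v s y := by
        have := hC s y hsIcc.1 hsIcc.2
        linarith [abs_le.mp this |>.1]
      have h2 : 0 ≤ ε * (2 * d * s) := by positivity
      have h4 : ε * ‖y - x0‖ ^ 2 = C + 1 := by rw [h]; exact hRsq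
      have h5 : W s y = v s y + (ε * ‖y - x0‖ ^ 2 + ε * (2 * d * s)) := by
        rw [hW]; simp only; rw [mul_add]
      linarith
  have hst0 : s ≤ t0 := hsIcc.2
  -- spatial part: each "second derivative" of W is nonnegative at the min
  have hspace : ∀ i : Fin d, 0 ≤ vxx s y i + 2 * ε := by
    intro i
    set e : EuclideanSpace ℝ (Fin d) := EuclideanSpace.single i (1:ℝ) with he
    have hne : ‖e‖ = 1 := by rw [he, EuclideanSpace.norm_single]; norm_num
    set c1 : ℝ := (inner ℝ (y - x0) e : ℝ) with hc1
    have hnorm : ∀ σ : ℝ, ‖y + σ • e - x0‖ ^ 2 = ‖y - x0‖ ^ 2 + 2 * c1 * σ + σ ^ 2 := by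
      intro σ
      have h1 : y + σ • e - x0 = (y - x0) + σ • e := by abel
      rw [h1, norm_add_sq_real, real_inner_smul_right, norm_smul, hne]
      simp only [Real.norm_eq_abs, mul_one, mul_pow, sq_abs]
      ring
    have hvd : ∀ σ : ℝ, HasDerivAt (fun σ' : ℝ => v s (y + σ' • e)) (vx s (y + σ • e) i) σ := by
      intro σ
      have h := hvx s (y + σ • e) i hs0 hst0
      have h' : HasDerivAt (fun σ' : ℝ => v s ((y + σ • e) + σ' • e)) (vx s (y + σ • e) i)
          ((fun x : ℝ => x - σ) σ) := by
        simpa using h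
      have h2 : HasDerivAt ((fun σ' : ℝ => v s ((y + σ • e) + σ' • e)) ∘ fun x : ℝ => x - σ)
          (vx s (y + σ • e) i * 1) σ :=
        HasDerivAt.comp σ h' ((hasDerivAt_id σ).sub_const σ)
      have h3 : ((fun σ' : ℝ => v s ((y + σ • e) + σ' • e)) ∘ fun x : ℝ => x - σ)
          = fun σ'' : ℝ => v s (y + σ'' • e) := by
        funext σ''
        simp only [Function.comp]
        congr 1
        rw [sub_smul]
        abel
      rw [h3, mul_one] at h2
      exact h2
    have hQd : ∀ σ : ℝ, HasDerivAt
        (fun σ' : ℝ => ε * (‖y - x0‖ ^ 2 + 2 * c1 * σ' + σ' ^ 2 + 2 * d * s))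
        (ε * (2 * c1 + 2 * σ)) σ := by
      intro σ
      have h1 : HasDerivAt (fun σ' : ℝ => ‖y - x0‖ ^ 2 + 2 * c1 * σ' + σ' ^ 2 + 2 * d * s)
          (2 * c1 + 2 * σ) σ := by
        have := (((hasDerivAt_id σ).const_mul (2*c1)).const_add (‖y - x0‖ ^ 2)).add
          (hasDerivAt_pow 2 σ) |>.add_const (2 * (d:ℝ) * s)
        refine HasDerivAt.congr_deriv this ?_
        push_cast; ring
      exact h1.const_mul ε
    have hfun : (fun σ : ℝ => W s (y + σ • e))
        = fun σ : ℝ => v s (y + σ • e) + ε * (‖y - x0‖ ^ 2 + 2 * c1 * σ + σ ^ 2 + 2 * d * s) := by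
      funext σ
      rw [hW]
      simp only
      rw [hnorm σ]
    have hρ : 0 < R - ‖y - x0‖ := by linarith
    have hmem : ∀ σ : ℝ, |σ| < R - ‖y - x0‖ → (s, y + σ • e) ∈ K := by
      intro σ hσ
      rw [hK]
      refine ⟨hsIcc, ?_⟩
      rw [Metric.mem_closedBall, dist_eq_norm]
      have h1 : y + σ • e - x0 = (y - x0) + σ • e := by abel
      rw [h1]
      calc ‖(y - x0) + σ • e‖ ≤ ‖y - x0‖ + ‖σ • e‖ := norm_add_le _ _
        _ = ‖y - x0‖ + |σ| := by rw [norm_smul, hne, mul_one, Real.norm_eq_abs]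
        _ ≤ R := by linarith
    have hlm : IsLocalMin (fun σ : ℝ => W s (y + σ • e)) 0 := by
      have hball : Metric.ball (0:ℝ) (R - ‖y - x0‖) ∈ 𝓝 (0:ℝ) := Metric.ball_mem_nhds _ hρ
      filter_upwards [hball] with σ hσ
      have hmem' : (s, y + σ • e) ∈ K := hmem σ (by simpa [Real.dist_eq] using hσ)
      have h5 := hpmin _ hmem'
      simpa using h5
    rw [hfun] at hlm
    have hsd : HasDerivAt (fun σ : ℝ => vx s (y + σ • e) i + ε * (2 * c1 + 2 * σ))
        (vxx s y i + 2 * ε) 0 := by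
      have h1 : HasDerivAt (fun σ : ℝ => vx s (y + σ • e) i) (vxx s y i) 0 :=
        hvxx s y i hs0 hst0
      have h2 : HasDerivAt (fun σ : ℝ => ε * (2 * c1 + 2 * σ)) (2 * ε) 0 := by
        have := (((hasDerivAt_id (0:ℝ)).const_mul 2).const_add (2*c1)).const_mul ε
        refine HasDerivAt.congr_deriv this ?_
        ring
      exact h1.add h2
    exact second_deriv_test hlm
      (Filter.Eventually.of_forall fun σ => (hvd σ).add (hQd σ)) hsd
  -- time part
  have hdWt : HasDerivAt (fun t : ℝ => W t y) (vt s y + ε * (2 * d)) s := by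
    have h1 := hvt s y hs0 hst0
    have h2 : HasDerivAt (fun t : ℝ => ε * (‖y - x0‖ ^ 2 + 2 * d * t)) (ε * (2 * d)) s := by
      have := (((hasDerivAt_id s).const_mul (2*(d:ℝ))).const_add (‖y - x0‖ ^ 2)).const_mul ε
      refine HasDerivAt.congr_deriv this ?_
      ring
    have h3 := h1.add h2
    have h4 : (fun t : ℝ => W t y) = fun t : ℝ => v t y + ε * (‖y - x0‖ ^ 2 + 2 * d * t) := by
      funext t; rw [hW]
    rw [h4]
    exact h3
  have htime : vt s y + ε * (2 * d) ≤ 0 := by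
    rcases lt_or_eq_of_le hst0 with hlt | heq
    · have hlm : IsLocalMin (fun t : ℝ => W t y) s := by
        have hIoo : Set.Ioo (0:ℝ) t0 ∈ 𝓝 s := Ioo_mem_nhds hs0 hlt
        filter_upwards [hIoo] with t ht
        have hmem' : (t, y) ∈ K := by rw [hK]; exact ⟨⟨ht.1.le, ht.2.le⟩, hyB⟩
        exact hpmin _ hmem'
      have hz : deriv (fun t : ℝ => W t y) s = 0 := hlm.deriv_eq_zero
      rw [hdWt.deriv] at hz
      linarith [hz.le]
    · subst heq
      apply deriv_nonpos_right (a := (0:ℝ)) hs0 _ hdWt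
      intro t ht1 ht2
      have hmem' : (t, y) ∈ K := by rw [hK]; exact ⟨⟨ht1, ht2⟩, hyB⟩
      exact hpmin _ hmem'
  have hsum : (0:ℝ) ≤ ∑ i, vxx s y i + d * (2 * ε) := by
    calc (0:ℝ) ≤ ∑ i : Fin d, (vxx s y i + 2 * ε) :=
          Finset.sum_nonneg fun i _ => hspace i
      _ = ∑ i, vxx s y i + d * (2 * ε) := by
          rw [Finset.sum_add_distrib, Finset.sum_const, Finset.card_univ, Fintype.card_fin,
            nsmul_eq_mul]
  have hst := hstrict s y hs0 hst0
  have hee : ε * (2 * (d:ℝ)) = (d:ℝ) * (2 * ε) := by ring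
  linarith

theorem stmt3 (d : ℕ) (hd : 1 ≤ d) (T : ℝ≥0∞) (hT : 0 < T)
    (g : EuclideanSpace ℝ (Fin d) → ℝ) (hgc : Continuous g) (hgb : ∃ C, ∀ x, |g x| ≤ C)
    (hgfar : 0 < ⨅ x, |g x - 1|)
    (u : ℝ → EuclideanSpace ℝ (Fin d) → ℝ)
    (hu : IsHeatSolutionR d (fun y => zetaR y) T g u)
    (I S : ℝ) (hI : I = ⨅ x, g x) (hS : S = ⨆ x, g x) (hIgt : 1 < I)
    (hugt : ∀ t x, 0 ≤ t → ENNReal.ofReal t < T → 1 < u t x) :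
    ∀ t x, 0 ≤ t → ENNReal.ofReal t < T →
      t + I ≤ u t x ∧ u t x ≤ zetaR I * t + S := by
  obtain ⟨hcont, hzero, hbdd, ut, ux, uxx, hut, hux, huxx, _, _, heq⟩ := hu
  obtain ⟨Cg, hCg⟩ := hgb
  have hbddBelow : BddBelow (Set.range g) :=
    ⟨-Cg, by rintro _ ⟨x, rfl⟩; linarith [(abs_le.mp (hCg x)).1]⟩
  have hbddAbove : BddAbove (Set.range g) :=
    ⟨Cg, by rintro _ ⟨x, rfl⟩; linarith [(abs_le.mp (hCg x)).2]⟩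
  have hIle : ∀ x, I ≤ g x := fun x => hI ▸ ciInf_le hbddBelow x
  have hSge : ∀ x, g x ≤ S := fun x => hS ▸ le_ciSup hbddAbove x
  -- lower bound
  have hlow : ∀ t x, 0 ≤ t → ENNReal.ofReal t < T → t + I ≤ u t x := by
    intro t x ht htT
    rcases eq_or_lt_of_le ht with h | h
    · rw [← h, zero_add, hzero x]; exact hIle x
    · have hsub : ∀ s : ℝ, s ≤ t → ENNReal.ofReal s < T := fun s hst =>
        lt_of_le_of_lt (ENNReal.ofReal_le_ofReal hst) htT
      have key := min_principle (d := d) t h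
        (fun s y => u s y - s - I) (fun s y => ut s y - 1)
        (fun s y i => ux s y i) (fun s y i => uxx s y i)
        ?_ ?_ ?_ ?_ ?_ ?_ ?_ x
      · linarith [key]
      · apply ContinuousOn.sub
        apply ContinuousOn.sub
        · apply hcont.mono
          rintro ⟨s, y⟩ ⟨h1, h2⟩
          exact ⟨h1, hsub s h2⟩
        · exact continuous_fst.continuousOn
        · exact continuousOn_const
      · obtain ⟨C, hC⟩ := hbdd t htT
        refine ⟨C + t + |I|, fun s y hs hst => ?_⟩
        have h1 := abs_le.mp (hC s y hs hst)
        show |u s y - s - I| ≤ C + t + |I|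
        rw [abs_le]
        constructor
        · have := le_abs_self I; linarith [h1.1]
        · have := neg_abs_le I; linarith [h1.2]
      · intro s y hs hst
        exact ((hut s y hs (hsub s hst)).sub (hasDerivAt_id s)).sub_const I
      · intro s y i hs hst
        exact ((hux s y i hs (hsub s hst)).sub_const s).sub_const I
      · intro s y i hs hst
        exact huxx s y i hs (hsub s hst)
      · intro s y hs hst
        have h1 := heq s y hs (hsub s hst)
        have h2 : 1 < u s y := hugt s y hs.le (hsub s hst)
        have h3 := one_lt_zetaR h2
        simp only at h1 ⊢
        linarith
      · intro y
        simp only [hzero y]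
        linarith [hIle y]
  refine fun t x ht htT => ⟨hlow t x ht htT, ?_⟩
  -- upper bound
  rcases eq_or_lt_of_le ht with h | h
  · rw [← h, hzero x, mul_zero, zero_add]; exact hSge x
  · have hsub : ∀ s : ℝ, s ≤ t → ENNReal.ofReal s < T := fun s hst =>
      lt_of_le_of_lt (ENNReal.ofReal_le_ofReal hst) htT
    have key := min_principle (d := d) t h
      (fun s y => zetaR I * s + S - u s y) (fun s y => zetaR I - ut s y)
      (fun s y i => -(ux s y i)) (fun s y i => -(uxx s y i))
      ?_ ?_ ?_ ?_ ?_ ?_ ?_ x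
    · linarith [key]
    · apply ContinuousOn.sub
      · apply Continuous.continuousOn; fun_prop
      · apply hcont.mono
        rintro ⟨s, y⟩ ⟨h1, h2⟩
        exact ⟨h1, hsub s h2⟩
    · obtain ⟨C, hC⟩ := hbdd t htT
      refine ⟨|zetaR I| * t + |S| + C, fun s y hs hst => ?_⟩
      have h1 := abs_le.mp (hC s y hs hst)
      have h2 : |zetaR I * s| ≤ |zetaR I| * t := by
        rw [abs_mul]
        apply mul_le_mul_of_nonneg_left _ (abs_nonneg _)
        rw [abs_of_nonneg hs]; exact hst
      have h3 := abs_le.mp h2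
      have h4 := le_abs_self S
      have h5 := neg_abs_le S
      show |zetaR I * s + S - u s y| ≤ |zetaR I| * t + |S| + C
      rw [abs_le]
      constructor <;> [linarith [h1.2]; linarith [h1.1]]
    · intro s y hs hst
      have h1 := hut s y hs (hsub s hst)
      have h2 : HasDerivAt (fun τ : ℝ => zetaR I * τ + S) (zetaR I) s := by
        have := ((hasDerivAt_id s).const_mul (zetaR I)).add_const S
        simpa using this
      exact h2.sub h1
    · intro s y i hs hst
      exact (hux s y i hs (hsub s hst)).const_sub (zetaR I * s + S)
    · intro s y i hs hst
      exact (huxx s y i hs (hsub s hst)).neg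
    · intro s y hs hst
      have h1 := heq s y hs (hsub s hst)
      have h2 : I < u s y := by
        have := hlow s y hs.le (hsub s hst)
        linarith
      have h3 := zetaR_lt_zetaR hIgt h2
      have h4 : ∑ i : Fin d, -(uxx s y i) = -∑ i : Fin d, uxx s y i := by
        rw [Finset.sum_neg_distrib]
      simp only at h1 h4 ⊢
      rw [h4]
      linarith
    · intro y
      simp only [hzero y, mul_zero, zero_add]
      linarith [hSge y]
end
end

section
/- Let d ≥ 1, T ∈ (0,∞], and let u : [0,T) × ℝ^d → ℝ be a real-valued bounded classical solution of ∂_t u = Δu + ζ(u) with bounded continuous real-valued initial datum g satisfying inf_x |g(x) − 1| > 0. Set I = inf_x g(x) and S = sup_x g(x), assume S < 1, and assume u(t,x) < 1 for all (t,x) ∈ [0,T) × ℝ^d. Let k1 be the smallest positive integer with −2k1 ≤ I, and define −2k2 := S if S > −2, while if S ≤ −2 let −2k2 be the smallest number of the form −2k (k a positive integer) with −2k ≥ S. Then for all (t,x) ∈ [0,T) × ℝ^d one has −2k1 ≤ u(t,x) ≤ −2k2. -/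
set_option maxHeartbeats 1000000

open MeasureTheory Set Filter Topology Complex
open scoped ENNReal Real

noncomputable section

lemma zetaR_neg_even {k : ℕ} (hk : 0 < k) : zetaR (-(2 * (k : ℝ))) = 0 := by
  obtain ⟨n, rfl⟩ : ∃ n, k = n + 1 := ⟨k - 1, by omega⟩
  have h : ((-(2 * ((n + 1 : ℕ) : ℝ)) : ℝ) : ℂ) = -2 * ((n : ℂ) + 1) := by push_cast; ring
  rw [zetaR, h, riemannZeta_neg_two_mul_nat_add_one]
  simp

/-- ζ is real and positive at real points > 1. -/
lemma zeta_real_pos {x : ℝ} (hx : 1 < x) :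
    ∃ r : ℝ, 0 < r ∧ riemannZeta (x : ℂ) = (r : ℂ) := by
  have hre : 1 < (x : ℂ).re := by simpa using hx
  have hsum : Summable (fun n : ℕ => 1 / ((n : ℝ) + 1) ^ x) := by
    have h1 : Summable (fun n : ℕ => ((n : ℝ)) ^ (-x)) := by
      rw [Real.summable_nat_rpow]
      linarith
    have h2 := (summable_nat_add_iff 1).mpr h1
    apply h2.congr
    intro n
    rw [Real.rpow_neg (by positivity), one_div]
    norm_num
  refine ⟨∑' n : ℕ, 1 / ((n : ℝ) + 1) ^ x, ?_, ?_⟩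
  · apply Summable.tsum_pos hsum (fun n => by positivity) 0
    positivity
  · rw [zeta_eq_tsum_one_div_nat_add_one_cpow hre, Complex.ofReal_tsum]
    congr 1
    funext n
    have hc : ((n : ℂ) + 1) = (((n : ℝ) + 1 : ℝ) : ℂ) := by push_cast; ring
    rw [hc, ← Complex.ofReal_cpow (by positivity), Complex.ofReal_div]
    norm_num

/-- ζ ≤ 0 on the real interval (-2, 0). -/
lemma zetaR_nonpos_neg {y : ℝ} (h1 : -2 < y) (h2 : y < 0) : zetaR y ≤ 0 := by
  set x : ℝ := 1 - y with hxdef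
  have hx1 : 1 < x := by simp only [hxdef]; linarith
  have hx3 : x < 3 := by simp only [hxdef]; linarith
  obtain ⟨r, hrpos, hr⟩ := zeta_real_pos hx1
  have hs : ∀ n : ℕ, (x : ℂ) ≠ -(n : ℂ) := by
    intro n hcon
    have := congrArg Complex.re hcon
    simp at this
    have : (0:ℝ) ≤ (n:ℝ) := Nat.cast_nonneg n
    linarith
  have hs' : (x : ℂ) ≠ 1 := by
    intro hcon
    have := congrArg Complex.re hcon
    simp at this
    linarith
  have hfe := riemannZeta_one_sub hs hs'
  have hyc : (1 : ℂ) - (x : ℂ) = ((y : ℝ) : ℂ) := by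
    simp only [hxdef]; push_cast; ring
  rw [hyc] at hfe
  -- now express RHS as a real number
  have h2pi : ((2 : ℂ) * (π : ℂ)) = (((2 * π : ℝ)) : ℂ) := by push_cast; ring
  have hcpow : ((2 : ℂ) * (π : ℂ)) ^ (-(x:ℂ)) = (((2 * π : ℝ) ^ (-x) : ℝ) : ℂ) := by
    rw [h2pi, ← Complex.ofReal_neg, ← Complex.ofReal_cpow (by positivity)]
  have hgamma : Complex.Gamma (x : ℂ) = ((Real.Gamma x : ℝ) : ℂ) := Complex.Gamma_ofReal x
  have hcos : Complex.cos ((π : ℂ) * (x:ℂ) / 2) = ((Real.cos (π * x / 2) : ℝ) : ℂ) := by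
    have : ((π : ℂ) * (x:ℂ) / 2) = (((π * x / 2 : ℝ)) : ℂ) := by push_cast; ring
    rw [this, Complex.ofReal_cos]
  rw [hcpow, hgamma, hcos, hr] at hfe
  have hzre : riemannZeta ((y:ℝ):ℂ)
      = (((2 * ((2 * π) ^ (-x)) * Real.Gamma x * Real.cos (π * x / 2) * r) : ℝ) : ℂ) := by
    rw [hfe]; push_cast; ring
  have hre : zetaR y = 2 * ((2 * π) ^ (-x)) * Real.Gamma x * Real.cos (π * x / 2) * r := by
    rw [zetaR, hzre, Complex.ofReal_re]
  have hG : 0 < Real.Gamma x := Real.Gamma_pos_of_pos (by linarith)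
  have hp : (0:ℝ) < (2 * π) ^ (-x) := Real.rpow_pos_of_pos (by positivity) _
  have hcosn : Real.cos (π * x / 2) ≤ 0 := by
    apply Real.cos_nonpos_of_pi_div_two_le_of_le
    · nlinarith [Real.pi_pos]
    · nlinarith [Real.pi_pos]
  have hA : (0:ℝ) < 2 * ((2 * π) ^ (-x)) * Real.Gamma x * r := by positivity
  have hgoal : 2 * ((2 * π) ^ (-x)) * Real.Gamma x * Real.cos (π * x / 2) * r
      = (2 * ((2 * π) ^ (-x)) * Real.Gamma x * r) * Real.cos (π * x / 2) := by ring
  rw [hre, hgoal]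
  exact mul_nonpos_iff.mpr (Or.inl ⟨le_of_lt hA, hcosn⟩)

/-- Lipschitz bound for zetaR on a compact interval to the left of 1. -/
lemma zetaR_lipschitz {a b : ℝ} (hab : a ≤ b) (hb : b < 1) :
    ∃ L : ℝ, 0 ≤ L ∧ ∀ x ∈ Icc a b, ∀ y ∈ Icc a b, |zetaR x - zetaR y| ≤ L * |x - y| := by
  have hzan : AnalyticOnNhd ℂ riemannZeta {(1:ℂ)}ᶜ := by
    apply DifferentiableOn.analyticOnNhd _ isOpen_compl_singleton
    intro s hs
    exact (differentiableAt_riemannZeta hs).differentiableWithinAt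
  have hderiv_cont : ContinuousOn (deriv riemannZeta) {(1:ℂ)}ᶜ :=
    hzan.deriv.continuousOn
  have hmapsto : ∀ x ∈ Icc a b, ((x:ℝ):ℂ) ∈ ({(1:ℂ)}ᶜ : Set ℂ) := by
    intro x hx
    simp only [mem_compl_iff, mem_singleton_iff]
    intro hcon
    have := congrArg Complex.re hcon
    simp at this
    linarith [hx.2]
  have hcont2 : ContinuousOn (fun x : ℝ => ‖deriv riemannZeta ((x:ℝ):ℂ)‖) (Icc a b) := by
    apply ContinuousOn.norm
    exact hderiv_cont.comp (Complex.continuous_ofReal.continuousOn) hmapsto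
  obtain ⟨C, hC⟩ := (isCompact_Icc (a := a) (b := b)).exists_bound_of_continuousOn hcont2
  refine ⟨max C 0, le_max_right _ _, ?_⟩
  intro x hx y hy
  have hders : ∀ y ∈ Icc a b, HasDerivWithinAt (fun t : ℝ => zetaR t)
      ((deriv riemannZeta ((y:ℝ):ℂ)).re) (Icc a b) y := by
    intro y hy
    have h1 : DifferentiableAt ℂ riemannZeta ((y:ℝ):ℂ) :=
      differentiableAt_riemannZeta (by simpa using hmapsto y hy)
    exact (h1.hasDerivAt.real_of_complex).hasDerivWithinAt
  have hbound : ∀ y ∈ Icc a b, ‖(deriv riemannZeta ((y:ℝ):ℂ)).re‖ ≤ max C 0 := by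
    intro y hy
    calc ‖(deriv riemannZeta ((y:ℝ):ℂ)).re‖ ≤ ‖deriv riemannZeta ((y:ℝ):ℂ)‖ :=
          Complex.abs_re_le_norm _
      _ ≤ C := by simpa using hC y hy
      _ ≤ max C 0 := le_max_left _ _
  have := Convex.norm_image_sub_le_of_norm_hasDerivWithin_le hders hbound
    (convex_Icc a b) hy hx
  simpa [Real.norm_eq_abs] using this

namespace EtaAux

/-- Coefficients `(-1)^(n+1)` as a function on `ZMod 2`. -/
def Φ : ZMod 2 → ℂ := fun j => if j = 0 then -1 else 1

lemma sumPhi : ∑ j : ZMod 2, Φ j = 0 := by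
  have huniv : (Finset.univ : Finset (ZMod 2)) = {0, 1} := by decide
  rw [huniv, Finset.sum_pair (by decide : (0 : ZMod 2) ≠ 1)]
  simp [Φ]

/-- The analytic continuation of the eta-like L-series. -/
def E : ℂ → ℂ := ZMod.LFunction Φ

lemma Ediff : Differentiable ℂ E := ZMod.differentiable_LFunction_of_sum_zero sumPhi

lemma phi_even {n : ℕ} (h : 2 ∣ n) : Φ (n : ZMod 2) = -1 := by
  have h0 : ((n : ℕ) : ZMod 2) = 0 := (ZMod.natCast_eq_zero_iff n 2).mpr h
  rw [h0]; simp [Φ]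

lemma phi_odd {n : ℕ} (h : ¬ (2 ∣ n)) : Φ (n : ZMod 2) = 1 := by
  have h0 : ((n : ℕ) : ZMod 2) ≠ 0 := fun hc => h ((ZMod.natCast_eq_zero_iff n 2).mp hc)
  simp [Φ, h0]

/-- The even-indicator coefficients. -/
def e : ℕ → ℂ := fun n => if 2 ∣ n then 1 else 0

lemma e_summable {s : ℂ} (hs : 1 < s.re) : LSeriesSummable e s := by
  apply LSeriesSummable_of_bounded_of_one_lt_re (m := 1) _ hs
  intro n _
  simp only [e]
  split_ifs <;> simp

lemma tsum_e {s : ℂ} (hs : 1 < s.re) :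
    LSeries e s = (2:ℂ) ^ (-s) * riemannZeta s := by
  have hinj : Function.Injective (fun m : ℕ => 2 * m) := fun a b hab => by
    have h' : 2 * a = 2 * b := hab
    omega
  have hsupp : Function.support (LSeries.term e s) ⊆ Set.range (fun m : ℕ => 2 * m) := by
    intro n hn
    by_cases h : 2 ∣ n
    · obtain ⟨m, rfl⟩ := h
      exact ⟨m, rfl⟩
    · exfalso
      apply hn
      have hn0 : n ≠ 0 := by rintro rfl; exact h ⟨0, rfl⟩
      simp [LSeries.term, e, h, hn0]
  have hterm : ∀ m : ℕ, LSeries.term e s (2 * m) = (2:ℂ) ^ (-s) * LSeries.term 1 s m := by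
    intro m
    by_cases hm : m = 0
    · simp [hm, LSeries.term]
    · have h2m : 2 * m ≠ 0 := by omega
      simp only [LSeries.term, if_neg h2m, if_neg hm, Pi.one_apply]
      have he2 : e (2 * m) = 1 := by simp [e]
      rw [he2]
      have hc : ((2 * m : ℕ) : ℂ) = (((2:ℝ)) : ℂ) * (((m:ℝ)) : ℂ) := by push_cast; ring
      rw [hc, mul_cpow_ofReal_nonneg (by norm_num) (by positivity), Complex.cpow_neg]
      have hm2 : (((m:ℝ)) : ℂ) ^ s ≠ 0 := by
        rw [Ne, Complex.cpow_eq_zero_iff]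
        push_neg
        intro hcon
        exfalso
        simp only [Complex.ofReal_eq_zero, Nat.cast_eq_zero] at hcon
        exact hm hcon
      have h2s : (((2:ℝ)) : ℂ) ^ s ≠ 0 := by
        rw [Ne, Complex.cpow_eq_zero_iff]
        push_neg
        intro hcon
        norm_num at hcon
      have hcast : ((m : ℕ) : ℂ) = (((m:ℝ)) : ℂ) := by push_cast; rfl
      rw [hcast]
      have h2c : (2 : ℂ) = (((2:ℝ)) : ℂ) := by norm_num
      rw [h2c]
      field_simp
  have hchain : LSeries e s = ∑' m : ℕ, LSeries.term e s (2 * m) :=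
    (hinj.tsum_eq hsupp).symm
  rw [hchain]
  have : ∑' m : ℕ, LSeries.term e s (2 * m) = ∑' m : ℕ, (2:ℂ) ^ (-s) * LSeries.term 1 s m := by
    congr 1; funext m; exact hterm m
  rw [this, tsum_mul_left]
  rw [show ∑' m : ℕ, LSeries.term 1 s m = LSeries 1 s from rfl,
    LSeries_one_eq_riemannZeta hs]

lemma LSeries_phi {s : ℂ} (hs : 1 < s.re) :
    LSeries (fun n : ℕ => Φ (n : ZMod 2)) s = (1 - (2:ℂ) ^ (1 - s)) * riemannZeta s := by
  have hz : LSeriesSummable 1 s := LSeriesSummable_one_iff.mpr hs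
  have hw : LSeriesSummable e s := e_summable hs
  have hterm : ∀ n : ℕ, LSeries.term (fun n : ℕ => Φ (n : ZMod 2)) s n
      = LSeries.term 1 s n - 2 * LSeries.term e s n := by
    intro n
    by_cases hn : n = 0
    · simp [hn, LSeries.term]
    · simp only [LSeries.term, if_neg hn, Pi.one_apply]
      by_cases h2 : 2 ∣ n
      · rw [phi_even h2]
        simp only [e, if_pos h2]
        ring
      · rw [phi_odd h2]
        simp only [e, if_neg h2]
        ring
  have hsum : LSeries (fun n : ℕ => Φ (n : ZMod 2)) s
      = LSeries 1 s - 2 * LSeries e s := by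
    rw [show LSeries (fun n : ℕ => Φ (n : ZMod 2)) s
      = ∑' n, LSeries.term (fun n : ℕ => Φ (n : ZMod 2)) s n from rfl]
    have h1 : ∀ n : ℕ, LSeries.term (fun n : ℕ => Φ (n : ZMod 2)) s n
        = LSeries.term 1 s n - (fun n => 2 * LSeries.term e s n) n := fun n => hterm n
    have hz' : Summable (LSeries.term 1 s) := hz
    have hw' : Summable (LSeries.term e s) := hw
    rw [tsum_congr h1, Summable.tsum_sub hz' (hw'.mul_left 2), tsum_mul_left]
    rfl
  rw [hsum, LSeries_one_eq_riemannZeta hs, tsum_e hs]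
  have h2 : (2:ℂ) ^ (1 - s) = 2 * (2:ℂ) ^ (-s) := by
    rw [sub_eq_add_neg, Complex.cpow_add _ _ (by norm_num : (2:ℂ) ≠ 0), Complex.cpow_one]
  rw [h2]
  ring

lemma E_eq_LSeries {s : ℂ} (hs : 1 < s.re) :
    E s = (1 - (2:ℂ) ^ (1 - s)) * riemannZeta s := by
  rw [E, ZMod.LFunction_eq_LSeries Φ hs]
  exact LSeries_phi hs

/-- E agrees with `(1 - 2^(1-s)) ζ(s)` away from 1. -/
lemma E_eq {s : ℂ} (hs : s ≠ 1) :
    E s = (1 - (2:ℂ) ^ (1 - s)) * riemannZeta s := by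
  have hEan : AnalyticOnNhd ℂ E {(1:ℂ)}ᶜ :=
    Ediff.differentiableOn.analyticOnNhd isOpen_compl_singleton
  have hGan : AnalyticOnNhd ℂ (fun s => (1 - (2:ℂ) ^ (1 - s)) * riemannZeta s) {(1:ℂ)}ᶜ := by
    apply DifferentiableOn.analyticOnNhd _ isOpen_compl_singleton
    intro z hz
    apply DifferentiableAt.differentiableWithinAt
    apply DifferentiableAt.mul
    · apply DifferentiableAt.sub (differentiableAt_const _)
      exact ((differentiableAt_const (1:ℂ)).sub differentiableAt_id).const_cpow
        (Or.inl (by norm_num))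
    · exact differentiableAt_riemannZeta hz
  have hpre : IsPreconnected ({(1:ℂ)}ᶜ : Set ℂ) := by
    apply IsConnected.isPreconnected
    apply isConnected_compl_singleton_of_one_lt_rank
    rw [Complex.rank_real_complex]
    norm_num
  have h2mem : (2:ℂ) ∈ ({(1:ℂ)}ᶜ : Set ℂ) := by norm_num
  have hev : E =ᶠ[𝓝 (2:ℂ)] (fun s => (1 - (2:ℂ) ^ (1 - s)) * riemannZeta s) := by
    have hopen : IsOpen {s : ℂ | 1 < s.re} := isOpen_lt continuous_const Complex.continuous_re
    have h2m : (2:ℂ) ∈ {s : ℂ | 1 < s.re} := by simp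
    filter_upwards [hopen.mem_nhds h2m] with z hz
    exact E_eq_LSeries hz
  exact hEan.eqOn_of_preconnected_of_eventuallyEq hGan hpre h2mem hev hs

/-- terms of the rearranged (pairing) series -/
def f (k : ℕ) (s : ℂ) : ℂ :=
  (((2*k+1 : ℕ) : ℝ) : ℂ) ^ (-s) - (((2*k+2 : ℕ) : ℝ) : ℂ) ^ (-s)

def F : ℂ → ℂ := fun s => ∑' k, f k s

lemma cpow_deriv (s : ℂ) {t : ℝ} (ht : 0 < t) :
    HasDerivAt (fun r : ℝ => ((r:ℝ):ℂ) ^ (-s)) (-s * ((t:ℝ):ℂ) ^ (-s - 1)) t := by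
  have h0 : ((t:ℝ):ℂ) ∈ Complex.slitPlane := by
    rw [Complex.mem_slitPlane_iff]
    left; simpa using ht
  have h1 := (Complex.hasStrictDerivAt_cpow_const (c := -s) h0).hasDerivAt
  exact h1.comp_ofReal

lemma f_norm_bound (k : ℕ) {s : ℂ} (hs : 0 < s.re) :
    ‖f k s‖ ≤ ‖s‖ * ((2*(k:ℝ)+1)) ^ (-s.re - 1) := by
  set a : ℝ := 2*(k:ℝ)+1 with hadef
  set b : ℝ := 2*(k:ℝ)+2 with hbdef
  have ha1 : (1:ℝ) ≤ a := by
    simp only [hadef]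
    have : (0:ℝ) ≤ (k:ℝ) := Nat.cast_nonneg k
    linarith
  have ha0 : (0:ℝ) < a := by linarith
  have hders : ∀ t ∈ Icc a b, HasDerivWithinAt (fun r : ℝ => ((r:ℝ):ℂ) ^ (-s))
      (-s * ((t:ℝ):ℂ) ^ (-s - 1)) (Icc a b) t := by
    intro t ht
    exact (cpow_deriv s (by linarith [ht.1])).hasDerivWithinAt
  have hbound : ∀ t ∈ Ico a b, ‖-s * ((t:ℝ):ℂ) ^ (-s - 1)‖ ≤ ‖s‖ * a ^ (-s.re - 1) := by
    intro t ht
    have ht0 : (0:ℝ) < t := by linarith [ht.1]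
    rw [norm_mul, norm_neg]
    apply mul_le_mul_of_nonneg_left _ (norm_nonneg s)
    have habs : ‖((t:ℝ):ℂ) ^ (-s - 1)‖ = t ^ ((-s - 1).re) := by
      rw [Complex.norm_cpow_eq_rpow_re_of_pos ht0]
    rw [habs]
    have hre : (-s - 1).re = -s.re - 1 := by simp
    rw [hre]
    exact Real.rpow_le_rpow_of_nonpos ha0 ht.1 (by linarith)
  have hmvt := norm_image_sub_le_of_norm_deriv_le_segment' hders hbound b
    (right_mem_Icc.mpr (by simp only [hadef, hbdef]; linarith))
  have hba : b - a = 1 := by simp only [hadef, hbdef]; ring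
  rw [hba, mul_one] at hmvt
  have hfk : f k s = -((((b:ℝ)):ℂ) ^ (-s) - (((a:ℝ)):ℂ) ^ (-s)) := by
    rw [f]
    have hca : (((2*k+1 : ℕ) : ℝ) : ℂ) = ((a:ℝ):ℂ) := by simp only [hadef]; push_cast; ring
    have hcb : (((2*k+2 : ℕ) : ℝ) : ℂ) = ((b:ℝ):ℂ) := by simp only [hbdef]; push_cast; ring
    rw [hca, hcb]; ring
  rw [hfk, norm_neg]
  exact hmvt

lemma summable_aux {δ : ℝ} (hδ : 0 < δ) :
    Summable (fun k : ℕ => ((2*(k:ℝ)+1)) ^ (-δ - 1)) := by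
  have h1 : Summable (fun k : ℕ => ((k:ℝ)+1) ^ (-δ - 1)) := by
    have h2 : Summable (fun k : ℕ => ((k:ℝ)) ^ (-δ - 1)) :=
      Real.summable_nat_rpow.mpr (by linarith)
    have h3 := (summable_nat_add_iff 1).mpr h2
    apply h3.congr
    intro k
    push_cast
    ring_nf
  apply Summable.of_nonneg_of_le _ _ h1
  · intro k; positivity
  · intro k
    apply Real.rpow_le_rpow_of_nonpos (by positivity) (by push_cast; linarith) (by linarith)

lemma F_diff : DifferentiableOn ℂ F {s : ℂ | 0 < s.re} := by
  intro s₀ hs₀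
  simp only [mem_setOf_eq] at hs₀
  set δ : ℝ := s₀.re / 2 with hδdef
  have hδ : 0 < δ := by simp only [hδdef]; linarith
  set R : ℝ := ‖s₀‖ + 1 with hRdef
  have hR : 0 < R := by positivity
  set U : Set ℂ := {s : ℂ | δ < s.re} ∩ Metric.ball 0 R with hUdef
  have hUo : IsOpen U :=
    (isOpen_lt continuous_const Complex.continuous_re).inter Metric.isOpen_ball
  have hs₀U : s₀ ∈ U := by
    constructor
    · simp only [mem_setOf_eq]; linarith
    · rw [Metric.mem_ball, dist_zero_right]; simp only [hRdef]; linarith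
  have hdiffk : ∀ k : ℕ, DifferentiableOn ℂ (f k) U := by
    intro k
    apply DifferentiableOn.sub
    · exact fun z _ => (differentiableAt_id.neg.const_cpow
        (Or.inl (by simp only [Ne, Complex.ofReal_eq_zero, Nat.cast_eq_zero]; omega))).differentiableWithinAt
    · exact fun z _ => (differentiableAt_id.neg.const_cpow
        (Or.inl (by simp only [Ne, Complex.ofReal_eq_zero, Nat.cast_eq_zero]; omega))).differentiableWithinAt
  have hu : Summable (fun k : ℕ => R * ((2*(k:ℝ)+1)) ^ (-δ - 1)) :=
    (summable_aux hδ).mul_left R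
  have hbound : ∀ (k : ℕ), ∀ w ∈ U, ‖f k w‖ ≤ R * ((2*(k:ℝ)+1)) ^ (-δ - 1) := by
    intro k w hw
    have hwre : δ < w.re := hw.1
    have hwn : ‖w‖ < R := by
      have := hw.2; rwa [Metric.mem_ball, dist_zero_right] at this
    calc ‖f k w‖ ≤ ‖w‖ * ((2*(k:ℝ)+1)) ^ (-w.re - 1) := f_norm_bound k (by linarith)
      _ ≤ R * ((2*(k:ℝ)+1)) ^ (-δ - 1) := by
          apply mul_le_mul (le_of_lt hwn) _ (by positivity) (le_of_lt hR)
          apply Real.rpow_le_rpow_of_exponent_le (by push_cast; linarith)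
          linarith
  have hFdiff : DifferentiableOn ℂ F U :=
    differentiableOn_tsum_of_summable_norm hu hdiffk hUo hbound
  exact (hFdiff.differentiableAt (hUo.mem_nhds hs₀U)).differentiableWithinAt

lemma F_eq_LSeries {s : ℂ} (hs : 1 < s.re) :
    F s = LSeries (fun n : ℕ => Φ (n : ZMod 2)) s := by
  have hsm : LSeriesSummable (fun n : ℕ => Φ (n : ZMod 2)) s :=
    ZMod.LSeriesSummable_of_one_lt_re Φ hs
  set t : ℕ → ℂ := LSeries.term (fun n : ℕ => Φ (n : ZMod 2)) s with htdef
  have hsm' : Summable t := hsm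
  have heven : Summable (fun k : ℕ => t (2*k)) :=
    hsm'.comp_injective (fun a b hab => by
      have h' : 2 * a = 2 * b := hab; omega)
  have hodd : Summable (fun k : ℕ => t (2*k+1)) :=
    hsm'.comp_injective (fun a b hab => by
      have h' : 2 * a + 1 = 2 * b + 1 := hab; omega)
  have heven2 : Summable (fun k : ℕ => t (2*k+2)) :=
    hsm'.comp_injective (fun a b hab => by
      have h' : 2 * a + 2 = 2 * b + 2 := hab; omega)
  have ht0 : t 0 = 0 := by simp [htdef, LSeries.term]
  have hkey : ∑' k, t (2*k) = ∑' k, t (2*k+2) := by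
    rw [Summable.tsum_eq_zero_add heven]
    have h20 : t (2*0) = 0 := by norm_num [ht0]
    rw [h20, zero_add]
    exact tsum_congr fun k => rfl
  have htodd : ∀ k : ℕ, t (2*k+1) = (((2*k+1 : ℕ) : ℝ) : ℂ) ^ (-s) := by
    intro k
    have hne : (2*k+1 : ℕ) ≠ 0 := by omega
    have hd : ¬ (2 ∣ (2*k+1 : ℕ)) := by omega
    simp only [htdef, LSeries.term, if_neg hne, phi_odd hd]
    rw [Complex.cpow_neg]
    have : (((2*k+1 : ℕ) : ℝ) : ℂ) = ((2*k+1 : ℕ) : ℂ) := by push_cast; ring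
    rw [this, one_div]
  have hteven : ∀ k : ℕ, t (2*k+2) = -((((2*k+2 : ℕ) : ℝ) : ℂ) ^ (-s)) := by
    intro k
    have hne : (2*k+2 : ℕ) ≠ 0 := by omega
    have hd : (2 ∣ (2*k+2 : ℕ)) := by omega
    simp only [htdef, LSeries.term, if_neg hne, phi_even hd]
    rw [Complex.cpow_neg]
    have : (((2*k+2 : ℕ) : ℝ) : ℂ) = ((2*k+2 : ℕ) : ℂ) := by push_cast; ring
    rw [this]
    ring
  have hfk : ∀ k : ℕ, f k s = t (2*k+1) + t (2*k+2) := by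
    intro k
    rw [htodd k, hteven k, f]
    ring
  have hodd' : Summable (fun k : ℕ => (((2*k+1 : ℕ) : ℝ) : ℂ) ^ (-s)) := by
    apply hodd.congr; intro k; rw [htodd k]
  have heven2' : Summable (fun k : ℕ => -((((2*k+2 : ℕ) : ℝ) : ℂ) ^ (-s))) := by
    apply heven2.congr; intro k; rw [hteven k]
  have hFs : F s = (∑' k, t (2*k+1)) + ∑' k, t (2*k+2) := by
    rw [F]
    rw [tsum_congr hfk]
    exact Summable.tsum_add hodd heven2
  rw [hFs, ← hkey]
  rw [show LSeries (fun n : ℕ => Φ (n : ZMod 2)) s = ∑' n, t n from rfl]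
  rw [← tsum_even_add_odd heven hodd]
  ring

lemma E_eq_F : Set.EqOn E F {s : ℂ | 0 < s.re} := by
  have hEan : AnalyticOnNhd ℂ E {s : ℂ | 0 < s.re} :=
    Ediff.differentiableOn.analyticOnNhd (isOpen_lt continuous_const Complex.continuous_re)
  have hFan : AnalyticOnNhd ℂ F {s : ℂ | 0 < s.re} :=
    F_diff.analyticOnNhd (isOpen_lt continuous_const Complex.continuous_re)
  have hpre : IsPreconnected {s : ℂ | 0 < s.re} := (convex_halfSpace_re_gt 0).isPreconnected
  have h2mem : (2:ℂ) ∈ {s : ℂ | 0 < s.re} := by simp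
  have hev : E =ᶠ[𝓝 (2:ℂ)] F := by
    have hopen : IsOpen {s : ℂ | 1 < s.re} := isOpen_lt continuous_const Complex.continuous_re
    have h2m : (2:ℂ) ∈ {s : ℂ | 1 < s.re} := by simp
    filter_upwards [hopen.mem_nhds h2m] with z hz
    rw [E_eq_LSeries hz, ← LSeries_phi hz, F_eq_LSeries hz]
  exact hEan.eqOn_of_preconnected_of_eventuallyEq hFan hpre h2mem hev

end EtaAux

/-- ζ ≤ 0 on the real interval (0,1). -/
lemma zetaR_nonpos_pos {x : ℝ} (h0 : 0 < x) (h1 : x < 1) : zetaR x ≤ 0 := by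
  have hmem : ((x:ℝ):ℂ) ∈ {s : ℂ | 0 < s.re} := by simpa using h0
  have hEF := EtaAux.E_eq_F hmem
  have hne1 : ((x:ℝ):ℂ) ≠ 1 := by
    intro hcon
    have := congrArg Complex.re hcon
    simp at this
    linarith
  have hEG := EtaAux.E_eq hne1
  -- F at real x is the coercion of a nonneg real series
  have hterm : ∀ k : ℕ, EtaAux.f k ((x:ℝ):ℂ)
      = (((((2*k+1 : ℕ) : ℝ) ^ (-x) - (((2*k+2 : ℕ) : ℝ)) ^ (-x)) : ℝ) : ℂ) := by
    intro k
    rw [EtaAux.f]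
    have hexp : -((x:ℝ):ℂ) = (((-x : ℝ)) : ℂ) := by push_cast; ring
    rw [hexp, ← Complex.ofReal_cpow (by positivity), ← Complex.ofReal_cpow (by positivity)]
    push_cast
    ring
  have hFre : EtaAux.F ((x:ℝ):ℂ)
      = ((∑' k : ℕ, ((((2*k+1 : ℕ) : ℝ)) ^ (-x) - (((2*k+2 : ℕ) : ℝ)) ^ (-x)) : ℝ) : ℂ) := by
    rw [EtaAux.F, Complex.ofReal_tsum]
    exact tsum_congr hterm
  have hsum_nonneg : 0 ≤ ∑' k : ℕ, ((((2*k+1 : ℕ) : ℝ)) ^ (-x) - (((2*k+2 : ℕ) : ℝ)) ^ (-x)) := by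
    apply tsum_nonneg
    intro k
    have := Real.rpow_le_rpow_of_nonpos
      (by positivity : (0:ℝ) < ((2*k+1 : ℕ) : ℝ))
      (by push_cast; linarith : ((2*k+1 : ℕ) : ℝ) ≤ ((2*k+2 : ℕ) : ℝ))
      (by linarith : -x ≤ 0)
    linarith
  have hEre : 0 ≤ (EtaAux.E ((x:ℝ):ℂ)).re := by
    rw [hEF, hFre, Complex.ofReal_re]
    exact hsum_nonneg
  -- express E in terms of zetaR
  have hcpow : (2:ℂ) ^ ((1:ℂ) - (x:ℂ)) = ((((2:ℝ) ^ (1 - x)) : ℝ) : ℂ) := by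
    have he1 : ((1:ℂ) - (x:ℂ)) = (((1 - x : ℝ)) : ℂ) := by push_cast; ring
    have he2 : (2:ℂ) = (((2:ℝ)) : ℂ) := by norm_num
    rw [he1, he2, ← Complex.ofReal_cpow (by norm_num)]
  have hEG2 : EtaAux.E ((x:ℝ):ℂ) = (((1 - (2:ℝ) ^ (1 - x)) : ℝ) : ℂ) * riemannZeta ((x:ℝ):ℂ) := by
    rw [hEG, hcpow]
    push_cast
    ring
  have hre2 : (EtaAux.E ((x:ℝ):ℂ)).re = (1 - (2:ℝ) ^ (1 - x)) * zetaR x := by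
    rw [hEG2, Complex.re_ofReal_mul, zetaR]
  have h2x : 1 < (2:ℝ) ^ (1 - x) := by
    rw [Real.one_lt_rpow_iff_of_pos (by norm_num)]
    exact Or.inl ⟨one_lt_two, by linarith⟩
  rw [hre2] at hEre
  nlinarith

/-- Second derivative test: at a global max, second deriv is nonpositive. -/
lemma second_deriv_nonpos_of_max {f f' : ℝ → ℝ} {f'' : ℝ}
    (hf : ∀ r, HasDerivAt f (f' r) r) (hf'0 : HasDerivAt f' f'' 0)
    (hmax : ∀ r, f r ≤ f 0) : f'' ≤ 0 := by
  by_contra hcon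
  push_neg at hcon
  have h0 : f' 0 = 0 :=
    (IsLocalMax.hasDerivAt_eq_zero (Filter.Eventually.of_forall hmax) (hf 0))
  have hslope := (hf'0.hasDerivWithinAt (s := Ioi 0))
  rw [hasDerivWithinAt_iff_tendsto_slope] at hslope
  have hIoi : Ioi (0:ℝ) \ {0} = Ioi 0 := by
    ext y; simp only [mem_diff, mem_Ioi, mem_singleton_iff]
    exact ⟨fun h => h.1, fun h => ⟨h, ne_of_gt h⟩⟩
  rw [hIoi] at hslope
  have hev : ∀ᶠ s in 𝓝[>] (0:ℝ), 0 < slope f' 0 s :=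
    hslope.eventually (eventually_gt_nhds hcon)
  obtain ⟨u', hu', hsub⟩ := mem_nhdsGT_iff_exists_Ioo_subset.mp hev
  have hu'0 : (0:ℝ) < u' := hu'
  have hpos : ∀ s ∈ Ioo (0:ℝ) u', 0 < f' s := by
    intro s hs
    have h1 : 0 < slope f' 0 s := hsub hs
    rw [slope_def_field] at h1
    have h2 : 0 < (f' s - f' 0) / (s - 0) * s := mul_pos h1 hs.1
    rw [h0, sub_zero, sub_zero, div_mul_cancel₀ _ (ne_of_gt hs.1)] at h2
    exact h2
  have hmono : StrictMonoOn f (Icc 0 (u'/2)) := by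
    apply strictMonoOn_of_deriv_pos (convex_Icc _ _)
    · exact fun x _ => (hf x).continuousAt.continuousWithinAt
    · intro x hx
      rw [interior_Icc] at hx
      rw [(hf x).deriv]
      exact hpos x ⟨hx.1, lt_of_lt_of_le hx.2 (by linarith)⟩
  have h2 : f 0 < f (u'/2) := by
    apply hmono (left_mem_Icc.mpr (by linarith)) (right_mem_Icc.mpr (by linarith)) (by linarith)
  exact absurd (hmax (u'/2)) (not_le.mpr h2)

/-- Derivative at a max approached from the left is nonnegative. -/
lemma deriv_nonneg_of_left_max {f : ℝ → ℝ} {d s₀ : ℝ} (hs₀ : 0 < s₀)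
    (hf : HasDerivAt f d s₀) (hle : ∀ s ∈ Ioo 0 s₀, f s ≤ f s₀) : 0 ≤ d := by
  have hslope := hf.hasDerivWithinAt (s := Ioo 0 s₀)
  rw [hasDerivWithinAt_iff_tendsto_slope] at hslope
  have hIoo : Ioo 0 s₀ \ {s₀} = Ioo 0 s₀ := by
    ext y; simp only [mem_diff, mem_Ioo, mem_singleton_iff]
    exact ⟨fun h => h.1, fun h => ⟨h, ne_of_lt h.2⟩⟩
  rw [hIoo] at hslope
  have : NeBot (𝓝[Ioo 0 s₀] s₀) := right_nhdsWithin_Ioo_neBot hs₀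
  refine ge_of_tendsto hslope ?_
  filter_upwards [eventually_mem_nhdsWithin] with s hs
  rw [slope_def_field]
  exact div_nonneg_of_nonpos (by linarith [hle s hs]) (by linarith [hs.2])


section MaxPrin

local notation "E" d => EuclideanSpace ℝ (Fin d)

/-- Parabolic maximum principle on ℝ^d up to a fixed time horizon. -/
lemma heat_upper_bound (d : ℕ) (T : ℝ≥0∞)
    (u ut : ℝ → (E d) → ℝ) (ux uxx : ℝ → (E d) → Fin d → ℝ) (F : ℝ → ℝ)
    (hc : ContinuousOn (fun p : ℝ × (E d) => u p.1 p.2)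
      {p | 0 ≤ p.1 ∧ ENNReal.ofReal p.1 < T})
    (hut : ∀ t x, 0 < t → ENNReal.ofReal t < T → HasDerivAt (fun τ => u τ x) (ut t x) t)
    (hux : ∀ t x i, 0 < t → ENNReal.ofReal t < T →
      HasDerivAt (fun s : ℝ => u t (x + s • EuclideanSpace.single i (1:ℝ))) (ux t x i) 0)
    (huxx : ∀ t x i, 0 < t → ENNReal.ofReal t < T →
      HasDerivAt (fun s : ℝ => ux t (x + s • EuclideanSpace.single i (1:ℝ)) i) (uxx t x i) 0)
    (heq : ∀ t x, 0 < t → ENNReal.ofReal t < T → ut t x = (∑ i, uxx t x i) + F (u t x))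
    (t₀ : ℝ) (ht₀ : 0 ≤ t₀) (hT₀ : ENNReal.ofReal t₀ < T)
    (M : ℝ) (hM : ∀ t x, 0 ≤ t → t ≤ t₀ → |u t x| ≤ M)
    (c L : ℝ) (hL : 0 ≤ L)
    (hF : ∀ t x, 0 < t → t ≤ t₀ → c ≤ u t x → F (u t x) ≤ L * (u t x - c))
    (h0 : ∀ x, u 0 x ≤ c) :
    ∀ x, u t₀ x ≤ c := by
  intro x₀
  set K : ℝ := L + 2 * d + 1 with hKdef
  have hK1 : 1 ≤ K := by
    have : (0:ℝ) ≤ (d:ℝ) := Nat.cast_nonneg d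
    simp only [hKdef]; linarith
  have hKpos : 0 < K := by linarith
  -- reduce to an ε-perturbed bound
  suffices hsuf : ∀ ε : ℝ, 0 < ε → u t₀ x₀ - c ≤ ε * (Real.exp (K * t₀) * (1 + ‖x₀‖ ^ 2)) by
    by_contra hlt
    push_neg at hlt
    set B : ℝ := Real.exp (K * t₀) * (1 + ‖x₀‖ ^ 2) with hBdef
    have hB : 0 < B := by positivity
    set a : ℝ := u t₀ x₀ - c with hadef
    have ha : 0 < a := by simp only [hadef]; linarith
    have h1 := hsuf (a / (2 * B)) (by positivity)
    have h2 : a / (2 * B) * B = a / 2 := by field_simp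
    rw [h2] at h1
    linarith
  intro ε hε
  -- the barrier
  set h : ℝ → (E d) → ℝ := fun t x => ε * (Real.exp (K * t) * (1 + ‖x‖ ^ 2)) with hhdef
  set φ : ℝ → (E d) → ℝ := fun t x => u t x - c - h t x with hφdef
  have hM0 : 0 ≤ M := le_trans (abs_nonneg _) (hM 0 0 le_rfl ht₀)
  have hhpos : ∀ t x, 0 ≤ t → 0 < h t x := by
    intro t x ht; simp only [hhdef]; positivity
  have hhbig : ∀ t x, 0 ≤ t → ε * (1 + ‖x‖ ^ 2) ≤ h t x := by
    intro t x ht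
    have h1 : (1:ℝ) ≤ Real.exp (K * t) := Real.one_le_exp (mul_nonneg (le_of_lt hKpos) ht)
    have h2 : (0:ℝ) < 1 + ‖x‖ ^ 2 := by positivity
    simp only [hhdef]
    have := mul_le_mul_of_nonneg_left (mul_le_mul_of_nonneg_right h1 (le_of_lt h2)) (le_of_lt hε)
    rw [one_mul] at this
    exact this
  set ρ : ℝ := Real.sqrt ((M + |c|) / ε + 1) with hρdef
  have hρsq : ρ ^ 2 = (M + |c|) / ε + 1 := Real.sq_sqrt (by positivity)
  have hρ0 : 0 ≤ ρ := Real.sqrt_nonneg _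
  -- points where φ ≥ 0 lie in the ball of radius ρ
  have hball : ∀ t x, 0 ≤ t → t ≤ t₀ → 0 ≤ φ t x → ‖x‖ ≤ ρ := by
    intro t x ht htt hφ
    have h1 : ε * (1 + ‖x‖ ^ 2) ≤ h t x := hhbig t x ht
    have h2 : h t x ≤ u t x - c := by simp only [hφdef] at hφ; linarith
    have h3 : u t x - c ≤ M + |c| := by
      have h4 := (abs_le.mp (hM t x ht htt)).2
      have h5 := neg_abs_le c
      linarith
    have h6 : ε * ‖x‖ ^ 2 ≤ M + |c| - ε := by nlinarith
    by_contra hcon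
    push_neg at hcon
    have h8 : ρ ^ 2 < ‖x‖ ^ 2 := by nlinarith
    rw [hρsq] at h8
    have h7 : (M + |c|) / ε * ε = M + |c| := div_mul_cancel₀ _ (ne_of_gt hε)
    nlinarith [mul_lt_mul_of_pos_right h8 hε]
  -- the compact set where φ could be ≥ 0
  set D : Set (ℝ × (E d)) := {p | 0 ≤ p.1 ∧ ENNReal.ofReal p.1 < T} with hDdef
  set K₀ : Set (ℝ × (E d)) := Icc 0 t₀ ×ˢ Metric.closedBall (0 : E d) ρ with hK₀def
  have hK₀sub : K₀ ⊆ D := by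
    rintro ⟨t, x⟩ ⟨ht, -⟩
    exact ⟨ht.1, lt_of_le_of_lt (ENNReal.ofReal_le_ofReal ht.2) hT₀⟩
  have hK₀cpt : IsCompact K₀ := isCompact_Icc.prod (isCompact_closedBall _ _)
  have hφcont : ContinuousOn (fun p : ℝ × (E d) => φ p.1 p.2) K₀ := by
    apply ContinuousOn.sub
    · apply ContinuousOn.sub (hc.mono hK₀sub) continuousOn_const
    · apply Continuous.continuousOn
      simp only [hhdef]
      exact continuous_const.mul ((Real.continuous_exp.comp (continuous_const.mul continuous_fst)).mul
        (continuous_const.add ((continuous_snd.norm).pow 2)))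
  set A : Set (ℝ × (E d)) := {p ∈ K₀ | 0 ≤ φ p.1 p.2} with hAdef
  have hAclosed : IsClosed A := by
    have : A = K₀ ∩ (fun p : ℝ × (E d) => φ p.1 p.2) ⁻¹' (Ici 0) := by
      ext p; simp [hAdef, mem_preimage]
    rw [this]
    exact hφcont.preimage_isClosed_of_isClosed (hK₀cpt.isClosed) isClosed_Ici
  have hAcpt : IsCompact A := hK₀cpt.of_isClosed_subset hAclosed (fun p hp => hp.1)
  -- main claim : A is empty
  have hAempty : A = ∅ := by
    by_contra hAne
    obtain ⟨p₀, hp₀⟩ := nonempty_iff_ne_empty.mpr hAne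
    obtain ⟨q, hqA, hqmin⟩ := hAcpt.exists_isMinOn ⟨p₀, hp₀⟩
      (continuous_fst.continuousOn (f := fun p : ℝ × (E d) => p.1))
    obtain ⟨s₀, x₁⟩ := q
    have hs₀mem : s₀ ∈ Icc 0 t₀ := hqA.1.1
    have hφq : 0 ≤ φ s₀ x₁ := hqA.2
    have hx₁ : ‖x₁‖ ≤ ρ := hball s₀ x₁ hs₀mem.1 hs₀mem.2 hφq
    have hφ0neg : ∀ x : E d, φ 0 x < 0 := by
      intro x
      have h1 := hhpos 0 x le_rfl
      have h2 := h0 x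
      simp only [hφdef]
      linarith
    have hs₀pos : 0 < s₀ := by
      rcases lt_or_eq_of_le hs₀mem.1 with h | h
      · exact h
      · exfalso; rw [← h] at hφq; exact absurd hφq (not_le.mpr (hφ0neg x₁))
    have hs₀T : ENNReal.ofReal s₀ < T :=
      lt_of_le_of_lt (ENNReal.ofReal_le_ofReal hs₀mem.2) hT₀
    -- before time s₀, φ < 0 everywhere
    have hbefore : ∀ s x, 0 ≤ s → s < s₀ → φ s x < 0 := by
      intro s x hs hss
      by_contra hcon
      push_neg at hcon
      have hst : s ≤ t₀ := le_trans (le_of_lt hss) hs₀mem.2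
      have hxball : ‖x‖ ≤ ρ := hball s x hs hst hcon
      have hmem : (s, x) ∈ A := ⟨⟨⟨hs, hst⟩, by simpa [Metric.mem_closedBall, dist_zero_right] using hxball⟩, hcon⟩
      have := hqmin hmem
      simp only at this
      exact absurd this (not_le.mpr hss)
    -- at time s₀, φ ≤ 0 everywhere
    have hle : ∀ x : E d, φ s₀ x ≤ 0 := by
      intro x
      by_contra hcon
      push_neg at hcon
      have hxball : ‖x‖ ≤ ρ := hball s₀ x hs₀mem.1 hs₀mem.2 (le_of_lt hcon)
      have hcont : ContinuousWithinAt (fun s => φ s x) (Ioo 0 s₀) s₀ := by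
        have hmap : MapsTo (fun s => (s, x)) (Icc 0 t₀) K₀ := by
          intro s hs
          exact ⟨hs, by simpa [Metric.mem_closedBall, dist_zero_right] using hxball⟩
        have h9 : ContinuousOn (fun s => φ s x) (Icc 0 t₀) :=
          hφcont.comp ((continuous_id.prodMk continuous_const).continuousOn) hmap
        exact (h9 s₀ hs₀mem).mono
          (fun y hy => ⟨le_of_lt hy.1, le_trans (le_of_lt hy.2) hs₀mem.2⟩)
      have : NeBot (𝓝[Ioo 0 s₀] s₀) := right_nhdsWithin_Ioo_neBot hs₀pos
      have hev : ∀ᶠ s in 𝓝[Ioo 0 s₀] s₀, 0 < φ s x :=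
        hcont.eventually (eventually_gt_nhds hcon) |>.mono (fun s hs => hs)
      obtain ⟨s, hsφpos, hsmem⟩ := (hev.and eventually_mem_nhdsWithin).exists
      exact absurd hsφpos (not_lt.mpr (le_of_lt (hbefore s x (le_of_lt hsmem.1) hsmem.2)))
    have hzero : φ s₀ x₁ = 0 := le_antisymm (hle x₁) hφq
    -- time derivative at (s₀, x₁)
    set e₀ : ℝ := Real.exp (K * s₀) with he₀def
    have he₀pos : 0 < e₀ := Real.exp_pos _
    have hKs : HasDerivAt (fun s : ℝ => K * s) K s₀ := by
      simpa using (hasDerivAt_id s₀).const_mul K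
    have hexp : HasDerivAt (fun s : ℝ => Real.exp (K * s)) (e₀ * K) s₀ :=
      (Real.hasDerivAt_exp (K * s₀)).comp s₀ hKs
    have hth : HasDerivAt (fun s => h s x₁) (ε * (K * e₀) * (1 + ‖x₁‖ ^ 2)) s₀ := by
      have h4 := hexp.const_mul (ε * (1 + ‖x₁‖ ^ 2))
      simp only [hhdef]
      exact (h4.congr_deriv (by ring)).congr_of_eventuallyEq (Filter.Eventually.of_forall fun s => by ring)
    have hφt : HasDerivAt (fun s => φ s x₁)
        (ut s₀ x₁ - ε * (K * e₀) * (1 + ‖x₁‖ ^ 2)) s₀ := by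
      have h5 := ((hut s₀ x₁ hs₀pos hs₀T).sub_const c).sub hth
      simp only [hφdef]
      exact h5
    have htime : 0 ≤ ut s₀ x₁ - ε * (K * e₀) * (1 + ‖x₁‖ ^ 2) := by
      apply deriv_nonneg_of_left_max hs₀pos hφt
      intro s hs
      have h1 : φ s x₁ < 0 := hbefore s x₁ (le_of_lt hs.1) hs.2
      linarith [hzero]
    -- spatial second derivatives at (s₀, x₁)
    have hspace : ∀ i : Fin d, uxx s₀ x₁ i ≤ 2 * (ε * e₀) := by
      intro i
      set ev : E d := EuclideanSpace.single i (1:ℝ) with hevdef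
      have hev1 : ‖ev‖ = 1 := by rw [hevdef, EuclideanSpace.norm_single]; simp
      set a : ℝ := inner (𝕜 := ℝ) x₁ ev with hadef
      set b : ℝ := ‖x₁‖ ^ 2 with hbdef
      set c₁ : ℝ := ε * e₀ with hc₁def
      have hc₁pos : 0 < c₁ := mul_pos hε he₀pos
      -- translation property of the first spatial derivative
      have hU : ∀ r : ℝ, HasDerivAt (fun w : ℝ => u s₀ (x₁ + w • ev))
          (ux s₀ (x₁ + r • ev) i) r := by
        intro r
        have h1 := hux s₀ (x₁ + r • ev) i hs₀pos hs₀T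
        have h1' : HasDerivAt (fun s : ℝ => u s₀ ((x₁ + r • ev) + s • ev))
            (ux s₀ (x₁ + r • ev) i) (r - r) := by rwa [sub_self]
        have h2 : HasDerivAt (fun w : ℝ => w - r) 1 r := by
          simpa using (hasDerivAt_id r).sub_const r
        have h3 : HasDerivAt ((fun s : ℝ => u s₀ ((x₁ + r • ev) + s • ev)) ∘ (fun w : ℝ => w - r))
            (ux s₀ (x₁ + r • ev) i * 1) r := HasDerivAt.comp r h1' h2
        have h4 : ((fun s : ℝ => u s₀ ((x₁ + r • ev) + s • ev)) ∘ (fun w : ℝ => w - r))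
            = fun w : ℝ => u s₀ (x₁ + w • ev) := by
          funext w
          simp only [Function.comp]
          congr 1
          rw [add_assoc, ← add_smul]
          congr 2
          ring
        rw [h4] at h3
        simpa using h3
      have hVd : HasDerivAt (fun w : ℝ => ux s₀ (x₁ + w • ev) i) (uxx s₀ x₁ i) 0 :=
        huxx s₀ x₁ i hs₀pos hs₀T
      -- norm expansion
      have hnorm : ∀ r : ℝ, ‖x₁ + r • ev‖ ^ 2 = b + 2 * a * r + r ^ 2 := by
        intro r
        rw [@norm_add_sq_real]
        rw [real_inner_smul_right, norm_smul]
        simp [hev1, hadef, hbdef]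
        ring
      set θ : ℝ → ℝ := fun r => u s₀ (x₁ + r • ev) - c - c₁ * (1 + b + 2 * a * r + r ^ 2)
        with hθdef
      have hθeq : ∀ r : ℝ, φ s₀ (x₁ + r • ev) = θ r := by
        intro r
        simp only [hφdef, hhdef, hθdef, hnorm r]
        rw [hc₁def, he₀def]
        ring
      have hθ' : ∀ r : ℝ, HasDerivAt θ (ux s₀ (x₁ + r • ev) i - c₁ * (2 * a + 2 * r)) r := by
        intro r
        have hquad : HasDerivAt (fun r : ℝ => c₁ * (1 + b + 2 * a * r + r ^ 2))
            (c₁ * (2 * a + 2 * r)) r := by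
          have hl : HasDerivAt (fun r : ℝ => 1 + b + 2 * a * r + r ^ 2) (2 * a + 2 * r) r := by
            have h6 := (((hasDerivAt_id r).const_mul (2 * a)).const_add (1 + b)).add
              (hasDerivAt_pow 2 r)
            simpa [mul_comm, Pi.add_def] using h6
          simpa using hl.const_mul c₁
        exact ((hU r).sub_const c).sub hquad
      have hθ'' : HasDerivAt (fun r : ℝ => ux s₀ (x₁ + r • ev) i - c₁ * (2 * a + 2 * r))
          (uxx s₀ x₁ i - c₁ * 2) 0 := by
        have hlin : HasDerivAt (fun r : ℝ => c₁ * (2 * a + 2 * r)) (c₁ * 2) 0 := by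
          have h7 := (((hasDerivAt_id (0:ℝ)).const_mul 2).const_add (2 * a)).const_mul c₁
          simpa using h7
        exact hVd.sub hlin
      have hmaxθ : ∀ r : ℝ, θ r ≤ θ 0 := by
        intro r
        have h8 : θ 0 = 0 := by
          rw [← hθeq 0]
          simpa using hzero
        rw [h8, ← hθeq r]
        exact hle _
      have := second_deriv_nonpos_of_max hθ' hθ'' hmaxθ
      rw [hc₁def] at this
      linarith
    -- assemble the contradiction
    have hueq : u s₀ x₁ = c + ε * (e₀ * (1 + ‖x₁‖ ^ 2)) := by
      simp only [hφdef, hhdef, ← he₀def] at hzero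
      linarith
    have hXpos : 0 ≤ ε * (e₀ * (1 + ‖x₁‖ ^ 2)) := by positivity
    have huge : c ≤ u s₀ x₁ := by rw [hueq]; linarith
    have hFb : F (u s₀ x₁) ≤ L * (ε * (e₀ * (1 + ‖x₁‖ ^ 2))) := by
      have h9 := hF s₀ x₁ hs₀pos hs₀mem.2 huge
      have h10 : u s₀ x₁ - c = ε * (e₀ * (1 + ‖x₁‖ ^ 2)) := by rw [hueq]; ring
      rwa [h10] at h9
    have hsum : ∑ i, uxx s₀ x₁ i ≤ (d : ℝ) * (2 * (ε * e₀)) := by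
      calc ∑ i, uxx s₀ x₁ i ≤ ∑ _i : Fin d, 2 * (ε * e₀) :=
            Finset.sum_le_sum (fun i _ => hspace i)
        _ = (d : ℝ) * (2 * (ε * e₀)) := by
            rw [Finset.sum_const, Finset.card_univ, Fintype.card_fin, nsmul_eq_mul]
    have hB1 : 0 ≤ ‖x₁‖ ^ 2 := sq_nonneg _
    have heqq := heq s₀ x₁ hs₀pos hs₀T
    have hee : 0 < ε * e₀ := mul_pos hε he₀pos
    have hKval : K = L + 2 * (d:ℝ) + 1 := hKdef
    nlinarith [htime, heqq, hFb, hsum, hee, hB1, mul_nonneg (le_of_lt hee) hB1,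
      mul_nonneg (mul_nonneg (le_of_lt hee) hB1) (Nat.cast_nonneg (α := ℝ) d),
      Nat.cast_nonneg (α := ℝ) d]
  -- conclude
  by_contra hcon
  push_neg at hcon
  have hφpos : 0 < φ t₀ x₀ := by simp only [hφdef, hhdef]; linarith
  have hxball : ‖x₀‖ ≤ ρ := hball t₀ x₀ ht₀ le_rfl (le_of_lt hφpos)
  have : (t₀, x₀) ∈ A := ⟨⟨⟨ht₀, le_rfl⟩, by simpa [Metric.mem_closedBall, dist_zero_right] using hxball⟩, le_of_lt hφpos⟩
  rw [hAempty] at this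
  exact this

end MaxPrin


theorem stmt4 (d : ℕ) (hd : 1 ≤ d) (T : ℝ≥0∞) (hT : 0 < T)
    (g : EuclideanSpace ℝ (Fin d) → ℝ) (hgc : Continuous g) (hgb : ∃ C, ∀ x, |g x| ≤ C)
    (hgfar : 0 < ⨅ x, |g x - 1|)
    (u : ℝ → EuclideanSpace ℝ (Fin d) → ℝ)
    (hu : IsHeatSolutionR d (fun y => zetaR y) T g u)
    (I S : ℝ) (hI : I = ⨅ x, g x) (hS : S = ⨆ x, g x) (hSlt : S < 1)
    (hult : ∀ t x, 0 ≤ t → ENNReal.ofReal t < T → u t x < 1)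
    (k1 : ℕ) (hk1pos : 0 < k1) (hk1le : -(2 * (k1 : ℝ)) ≤ I)
    (hk1min : ∀ k : ℕ, 0 < k → -(2 * (k : ℝ)) ≤ I → k1 ≤ k)
    (c2 : ℝ)
    (hc2 : (-2 < S ∧ c2 = S) ∨
      (S ≤ -2 ∧ ∃ k2 : ℕ, 0 < k2 ∧ c2 = -(2 * (k2 : ℝ)) ∧ S ≤ c2 ∧
        ∀ k : ℕ, 0 < k → S ≤ -(2 * (k : ℝ)) → c2 ≤ -(2 * (k : ℝ)))) :
    ∀ t x, 0 ≤ t → ENNReal.ofReal t < T →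
      -(2 * (k1 : ℝ)) ≤ u t x ∧ u t x ≤ c2 := by
  obtain ⟨hcont, h0, hbdd, ut, ux, uxx, hut, hux, huxx, hutc, huxxc, heqn⟩ := hu
  obtain ⟨C, hC⟩ := hgb
  have hbAb : BddAbove (Set.range g) :=
    ⟨C, by rintro y ⟨z, rfl⟩; exact le_trans (le_abs_self _) (hC z)⟩
  have hbBl : BddBelow (Set.range g) :=
    ⟨-C, by rintro y ⟨z, rfl⟩; linarith [(abs_le.mp (hC z)).1]⟩
  have hgle : ∀ y, g y ≤ S := by intro y; rw [hS]; exact le_ciSup hbAb y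
  have hgge : ∀ y, I ≤ g y := by intro y; rw [hI]; exact ciInf_le hbBl y
  have hk1R : (1:ℝ) ≤ (k1:ℝ) := by exact_mod_cast hk1pos
  have hc2lt1 : c2 < 1 := by
    rcases hc2 with ⟨-, hc2S⟩ | ⟨-, k2, hk2pos, hc2eq, -, -⟩
    · rw [hc2S]; exact hSlt
    · have : (1:ℝ) ≤ (k2:ℝ) := by exact_mod_cast hk2pos
      rw [hc2eq]; linarith
  have hSle : S ≤ c2 := by
    rcases hc2 with ⟨-, hc2S⟩ | ⟨-, k2, hk2pos, hc2eq, hSc2, -⟩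
    · rw [hc2S]
    · exact hSc2
  have hzc2 : zetaR c2 ≤ 0 := by
    rcases hc2 with ⟨hS2, hc2S⟩ | ⟨-, k2, hk2pos, hc2eq, -, -⟩
    · rw [hc2S]
      rcases lt_trichotomy S 0 with hneg | hzero | hpos
      · exact zetaR_nonpos_neg hS2 hneg
      · rw [hzero]
        rw [zetaR]
        norm_num [riemannZeta_zero]
      · exact zetaR_nonpos_pos hpos hSlt
    · rw [hc2eq]
      exact le_of_eq (zetaR_neg_even hk2pos)
  -- the upper Lipschitz constant
  have hc2b : c2 ≤ max c2 0 := le_max_left _ _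
  have hblt1 : max c2 0 < 1 := max_lt hc2lt1 one_pos
  obtain ⟨L₁, hL₁0, hL₁⟩ := zetaR_lipschitz hc2b hblt1
  have claimA : ∀ y : ℝ, c2 ≤ y → y < 1 → zetaR y ≤ L₁ * (y - c2) := by
    intro y hy hy1
    by_cases hyb : y ≤ max c2 0
    · have h2 := hL₁ y ⟨hy, hyb⟩ c2 ⟨le_rfl, hc2b⟩
      rw [_root_.abs_of_nonneg (by linarith : (0:ℝ) ≤ y - c2)] at h2
      have h3 := (abs_le.mp h2).2
      linarith
    · push_neg at hyb
      have hypos : (0:ℝ) < y := lt_of_le_of_lt (le_max_right c2 0) hyb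
      have h4 := zetaR_nonpos_pos hypos hy1
      have h5 : 0 ≤ y - c2 := by linarith [le_max_left c2 0]
      nlinarith
  intro t x ht hTt
  obtain ⟨M, hM⟩ := hbdd t hTt
  have hM0 : 0 ≤ M := le_trans (abs_nonneg _) (hM 0 x le_rfl ht)
  constructor
  · -- lower bound, via the negated solution
    set m : ℝ := -(2*(k1:ℝ)) with hmdef
    have hmlt1 : m < 1 := by simp only [hmdef]; linarith
    have ha0m : -(M + 2*(k1:ℝ) + 1) ≤ m := by simp only [hmdef]; linarith
    obtain ⟨L₂, hL₂0, hL₂⟩ := zetaR_lipschitz ha0m hmlt1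
    have hzm : zetaR m = 0 := zetaR_neg_even hk1pos
    have hFlow : ∀ s y, 0 < s → s ≤ t → 2*(k1:ℝ) ≤ -u s y →
        -zetaR (-(-u s y)) ≤ L₂ * (-u s y - 2*(k1:ℝ)) := by
      intro s y hs hst hv
      have husy : u s y ≤ m := by simp only [hmdef]; linarith
      have hub : -(M + 2*(k1:ℝ) + 1) ≤ u s y := by
        have := (abs_le.mp (hM s y (le_of_lt hs) hst)).1
        linarith
      have h2 := hL₂ (u s y) ⟨hub, husy⟩ m ⟨ha0m, le_rfl⟩
      rw [hzm, sub_zero, _root_.abs_of_nonpos (by linarith : u s y - m ≤ 0)] at h2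
      have h3 := (abs_le.mp h2).1
      have h4 : -u s y - 2*(k1:ℝ) = -(u s y - m) := by simp only [hmdef]; ring
      rw [neg_neg, h4]
      linarith
    have h0low : ∀ y, -u 0 y ≤ 2*(k1:ℝ) := by
      intro y
      have := hgge y
      rw [h0 y]
      linarith
    have happ := heat_upper_bound d T (fun s y => -u s y) (fun s y => -ut s y)
      (fun s y i => -ux s y i) (fun s y i => -uxx s y i) (fun y => -zetaR (-y))
      hcont.neg
      (fun s y hs hsT => (hut s y hs hsT).neg)
      (fun s y i hs hsT => (hux s y i hs hsT).neg)
      (fun s y i hs hsT => (huxx s y i hs hsT).neg)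
      (fun s y hs hsT => by
        simp only [neg_neg]
        rw [heqn s y hs hsT, neg_add, ← Finset.sum_neg_distrib])
      t ht hTt M
      (fun s y hs hst => by rw [abs_neg]; exact hM s y hs hst)
      (2*(k1:ℝ)) L₂ hL₂0 hFlow h0low x
    linarith
  · -- upper bound
    have hFup : ∀ s y, 0 < s → s ≤ t → c2 ≤ u s y →
        zetaR (u s y) ≤ L₁ * (u s y - c2) := by
      intro s y hs hst hcle
      exact claimA _ hcle (hult s y (le_of_lt hs)
        (lt_of_le_of_lt (ENNReal.ofReal_le_ofReal hst) hTt))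
    have h0up : ∀ y, u 0 y ≤ c2 := by
      intro y
      rw [h0 y]
      exact le_trans (hgle y) hSle
    exact heat_upper_bound d T u ut ux uxx zetaR hcont hut hux huxx heqn
      t ht hTt M hM c2 L₁ hL₁0 hFup h0up x

end
end

section
/- Let Ω ⊆ ℝ be an open interval, let f : ℝ → ℝ be continuously differentiable on Ω, let t0 < T be real numbers, and let y : [t0, T] → Ω be differentiable with y'(t) = f(y(t)) for all t ∈ [t0, T]. If f(y(t0)) > 0, then y is strictly monotone increasing on [t0, T]; if f(y(t0)) < 0, then y is strictly monotone decreasing on [t0, T]. -/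
/-!
Along a solution `y`, the velocity `g t = f (y t)` solves the linear equation
`g' = f'(y t) * g`, whose coefficient is continuous, hence bounded, on `[t0, T]`. Solving it
backwards from a zero of `g` by uniqueness (Gronwall) would force `g t0 = 0`; so by the
intermediate value theorem `y' = g` keeps the sign of `f (y t0)` throughout `[t0, T]`.
-/

open Set

section LinearODE

variable {E : Type*} [NormedAddCommGroup E] [NormedSpace ℝ E] {g : ℝ → E} {c : ℝ → ℝ} {a b : ℝ}

theorem eqOn_zero_of_hasDerivWithinAt_smul_self {K : ℝ} (hc : ∀ t ∈ Ioc a b, ‖c t‖ ≤ K)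
    (hg : ContinuousOn g (Icc a b))
    (hg' : ∀ t ∈ Ioc a b, HasDerivWithinAt g (c t • g t) (Iic t) t) (hb : g b = 0) :
    EqOn g 0 (Icc a b) := by
  refine ODE_solution_unique_of_mem_Icc_left (v := fun t x => c t • x) (s := fun _ => univ)
    (K := K.toNNReal) (fun t ht => ?_) hg hg' (fun _ _ => trivial) continuousOn_const
    (fun t _ => by rw [Pi.zero_apply, smul_zero]; exact hasDerivWithinAt_const t _ 0) (fun _ _ => trivial) hb
  refine ((lipschitzWith_smul (c t)).weaken ?_).lipschitzOnWith
  rw [← NNReal.coe_le_coe, coe_nnnorm]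
  exact (hc t ht).trans (Real.le_coe_toNNReal K)

theorem ne_zero_of_hasDerivWithinAt_smul_self (hc : ContinuousOn c (Icc a b))
    (hg' : ∀ t ∈ Icc a b, HasDerivWithinAt g (c t • g t) (Icc a b) t) (ha : g a ≠ 0) :
    ∀ t ∈ Icc a b, g t ≠ 0 := by
  intro s hs hgs
  obtain ⟨K, hK⟩ := isCompact_Icc.exists_bound_of_continuousOn hc
  have hsub : Icc a s ⊆ Icc a b := Icc_subset_Icc_right hs.2
  refine ha (eqOn_zero_of_hasDerivWithinAt_smul_self (fun t ht => hK t (hsub (Ioc_subset_Icc_self ht)))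
    (fun t ht => (hg' t (hsub ht)).continuousWithinAt.mono hsub) (fun t ht => ?_) hgs
    (left_mem_Icc.2 hs.1))
  exact (hg' t (hsub (Ioc_subset_Icc_self ht))).mono_of_mem_nhdsWithin
    (Filter.mem_of_superset (Ioc_mem_nhdsLE ht.1) fun u hu => hsub ⟨hu.1.le, hu.2.trans ht.2⟩)

end LinearODE

theorem IsPreconnected.pos_of_forall_ne_zero {α : Type*} [TopologicalSpace α] {s : Set α}
    {g : α → ℝ} (hs : IsPreconnected s) (hg : ContinuousOn g s) (h0 : ∀ x ∈ s, g x ≠ 0)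
    {x₀ : α} (hx₀ : x₀ ∈ s) (hpos : 0 < g x₀) : ∀ x ∈ s, 0 < g x := by
  intro x hx
  by_contra! hneg
  obtain ⟨z, hz, hgz⟩ := hs.intermediate_value hx hx₀ hg ⟨hneg, hpos.le⟩
  exact h0 z hz hgz

theorem IsPreconnected.neg_of_forall_ne_zero {α : Type*} [TopologicalSpace α] {s : Set α}
    {g : α → ℝ} (hs : IsPreconnected s) (hg : ContinuousOn g s) (h0 : ∀ x ∈ s, g x ≠ 0)
    {x₀ : α} (hx₀ : x₀ ∈ s) (hneg : g x₀ < 0) : ∀ x ∈ s, g x < 0 := fun x hx =>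
  neg_pos.1 (hs.pos_of_forall_ne_zero hg.neg (fun x hx => neg_ne_zero.2 (h0 x hx)) hx₀
    (neg_pos.2 hneg) x hx)

theorem ODE_autonomous_comp_ne_zero {Ω : Set ℝ} (hΩ : IsOpen Ω) {f y : ℝ → ℝ}
    (hf : ContDiffOn ℝ 1 f Ω) {a b : ℝ} (hmem : ∀ t ∈ Icc a b, y t ∈ Ω)
    (hy : ∀ t ∈ Icc a b, HasDerivWithinAt y (f (y t)) (Icc a b) t) (ha : f (y a) ≠ 0) :
    ∀ t ∈ Icc a b, f (y t) ≠ 0 := by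
  have hycont : ContinuousOn y (Icc a b) := fun t ht => (hy t ht).continuousWithinAt
  refine ne_zero_of_hasDerivWithinAt_smul_self (c := fun t => deriv f (y t))
    ((hf.continuousOn_deriv_of_isOpen hΩ le_rfl).comp hycont hmem) (fun t ht => ?_) ha
  exact ((hf.differentiableOn one_ne_zero).differentiableAt
    (hΩ.mem_nhds (hmem t ht))).hasDerivAt.comp_hasDerivWithinAt t (hy t ht)

theorem stmt14_general (Ω : Set ℝ) (hΩopen : IsOpen Ω)
    (f : ℝ → ℝ) (hf : ContDiffOn ℝ 1 f Ω)
    (t0 T : ℝ) (htT : t0 < T) (y : ℝ → ℝ)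
    (hmem : ∀ t ∈ Set.Icc t0 T, y t ∈ Ω)
    (hy : ∀ t ∈ Set.Icc t0 T, HasDerivWithinAt y (f (y t)) (Set.Icc t0 T) t) :
    (0 < f (y t0) → StrictMonoOn y (Set.Icc t0 T)) ∧
    (f (y t0) < 0 → StrictAntiOn y (Set.Icc t0 T)) := by
  have hycont : ContinuousOn y (Icc t0 T) := fun t ht => (hy t ht).continuousWithinAt
  have hy' : ∀ t ∈ interior (Icc t0 T),
      HasDerivWithinAt y (f (y t)) (interior (Icc t0 T)) t :=
    fun t ht => (hy t (interior_subset ht)).mono interior_subset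
  have hfy : ContinuousOn (fun t => f (y t)) (Icc t0 T) := hf.continuousOn.comp hycont hmem
  have ht0 : t0 ∈ Icc t0 T := left_mem_Icc.2 htT.le
  have hne := ODE_autonomous_comp_ne_zero hΩopen hf hmem hy
  refine ⟨fun hpos => ?_, fun hneg => ?_⟩
  · exact strictMonoOn_of_hasDerivWithinAt_pos (convex_Icc t0 T) hycont hy' fun t ht =>
      isPreconnected_Icc.pos_of_forall_ne_zero hfy (hne hpos.ne') ht0 hpos t (interior_subset ht)
  · exact strictAntiOn_of_hasDerivWithinAt_neg (convex_Icc t0 T) hycont hy' fun t ht =>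
      isPreconnected_Icc.neg_of_forall_ne_zero hfy (hne hneg.ne) ht0 hneg t (interior_subset ht)

theorem stmt14 (Ω : Set ℝ) (hΩopen : IsOpen Ω) (hΩconn : Ω.OrdConnected)
    (f : ℝ → ℝ) (hf : ContDiffOn ℝ 1 f Ω)
    (t0 T : ℝ) (htT : t0 < T) (y : ℝ → ℝ)
    (hmem : ∀ t ∈ Set.Icc t0 T, y t ∈ Ω)
    (hy : ∀ t ∈ Set.Icc t0 T, HasDerivWithinAt y (f (y t)) (Set.Icc t0 T) t) :
    (0 < f (y t0) → StrictMonoOn y (Set.Icc t0 T)) ∧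
    (f (y t0) < 0 → StrictAntiOn y (Set.Icc t0 T)) :=
  stmt14_general Ω hΩopen f hf t0 T htT y hmem hy
end

section
/- Let f : ℝ → ℝ be continuously differentiable, let t0 ∈ ℝ, and let y : [t0, ∞) → ℝ be differentiable with y'(t) = f(y(t)) for all t ≥ t0. Assume f(y(t0)) > 0 and that y is bounded on [t0, ∞). Then y is strictly monotone increasing and there exists L ∈ ℝ such that y(t) → L as t → ∞ and f(L) = 0; that is, y converges to a zero of f. -/
/-!
Since `f` is locally Lipschitz, solutions of `y' = f(y)` are unique, so a trajectory that meets a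
zero of `f` at some time `b` coincides with the constant solution on `[t0, b]`; as `f (y t0) ≠ 0`
this never happens, and by the intermediate value theorem `f ∘ y` stays positive. Hence `y` is
strictly increasing, and being bounded it converges to some `L`. Finally `y' = f ∘ y → f L`, and
by the mean value theorem on `[t, t + 1]` the derivative of a convergent function cannot
have a nonzero limit, so `f L = 0`.
-/

open Set Filter Topology NNReal

theorem eqOn_const_of_hasDerivWithinAt_of_apply_eq_zero {E : Type*} [NormedAddCommGroup E]
    [NormedSpace ℝ E] {f : E → E} {K : ℝ≥0} {s : Set E} (hf : LipschitzOnWith K f s)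
    {y : ℝ → E} {a b : ℝ} (hy : ContinuousOn y (Icc a b))
    (hy' : ∀ t ∈ Ioc a b, HasDerivWithinAt y (f (y t)) (Iic t) t)
    (hys : ∀ t ∈ Ioc a b, y t ∈ s) (hb : f (y b) = 0) :
    EqOn y (fun _ ↦ y b) (Icc a b) :=
  ODE_solution_unique_of_mem_Icc_left (v := fun _ ↦ f) (fun _ _ ↦ hf) hy hy' hys
    continuousOn_const (fun t _ ↦ by simpa [hb] using hasDerivWithinAt_const t (Iic t) (y b))
    (fun _ ht ↦ hys b ⟨ht.1.trans_le ht.2, le_rfl⟩) rfl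

theorem apply_ne_zero_of_hasDerivWithinAt {E : Type*} [NormedAddCommGroup E]
    [NormedSpace ℝ E] {f : E → E} {K : ℝ≥0} {s : Set E} (hf : LipschitzOnWith K f s)
    {y : ℝ → E} {t0 : ℝ} (hy : ∀ t ∈ Ici t0, HasDerivWithinAt y (f (y t)) (Ici t0) t)
    (hys : ∀ t ∈ Ici t0, y t ∈ s) (h0 : f (y t0) ≠ 0) {t : ℝ} (ht : t ∈ Ici t0) :
    f (y t) ≠ 0 := by
  intro hzero
  have hconst := eqOn_const_of_hasDerivWithinAt_of_apply_eq_zero hf (b := t)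
    (fun τ hτ ↦ (hy τ hτ.1).continuousWithinAt.mono Icc_subset_Ici_self)
    (fun τ hτ ↦ ((hy τ hτ.1.le).hasDerivAt (Ici_mem_nhds hτ.1)).hasDerivWithinAt)
    (fun τ hτ ↦ hys τ hτ.1.le) hzero
  rw [hconst ⟨le_rfl, ht⟩] at h0
  exact h0 hzero

theorem MonotoneOn.exists_tendsto_atTop {α β : Type*} [LinearOrder α]
    [ConditionallyCompleteLinearOrder β] [TopologicalSpace β] [OrderTopology β] {y : α → β}
    {t0 : α} (hy : MonotoneOn y (Ici t0)) (hbdd : BddAbove (y '' Ici t0)) :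
    ∃ L, Tendsto y atTop (𝓝 L) := by
  have hmono : Monotone fun t ↦ y (max t0 t) := fun s t hst ↦
    hy (le_max_left _ _) (le_max_left _ _) (max_le_max le_rfl hst)
  have hrange : BddAbove (range fun t ↦ y (max t0 t)) :=
    hbdd.mono (range_subset_iff.2 fun t ↦ mem_image_of_mem y (le_max_left t0 t))
  refine ⟨_, (tendsto_atTop_ciSup hmono hrange).congr' ?_⟩
  filter_upwards [eventually_ge_atTop t0] with t ht
  rw [max_eq_right ht]

theorem eq_zero_of_tendsto_of_hasDerivAt_of_tendsto {y y' : ℝ → ℝ} {L l : ℝ}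
    (hy : ∀ᶠ t in atTop, HasDerivAt y (y' t) t) (hL : Tendsto y atTop (𝓝 L))
    (hl : Tendsto y' atTop (𝓝 l)) : l = 0 := by
  obtain ⟨T, hT⟩ := eventually_atTop.1 hy
  have hslope : ∀ t ∈ Ici T, ∃ ξ ∈ Ioo t (t + 1), y' ξ = y (t + 1) - y t := by
    intro t ht
    obtain ⟨ξ, hξ, hξ'⟩ := exists_hasDerivAt_eq_slope y y' (lt_add_one t)
      (fun τ hτ ↦ (hT τ (ht.trans hτ.1)).continuousAt.continuousWithinAt)
      (fun τ hτ ↦ hT τ (ht.trans hτ.1.le))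
    exact ⟨ξ, hξ, by simpa using hξ'⟩
  choose! ξ hξ hξ' using hslope
  have hξ_atTop : Tendsto ξ atTop atTop :=
    tendsto_atTop_mono' _ (eventually_atTop.2 ⟨T, fun t ht ↦ (hξ t ht).1.le⟩) tendsto_id
  have hdiff : Tendsto (fun t ↦ y (t + 1) - y t) atTop (𝓝 (L - L)) :=
    (hL.comp (tendsto_atTop_add_const_right _ 1 tendsto_id)).sub hL
  rw [sub_self] at hdiff
  refine tendsto_nhds_unique ((hl.comp hξ_atTop).congr' ?_) hdiff
  exact eventually_atTop.2 ⟨T, fun t ht ↦ hξ' t ht⟩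

theorem stmt15 (f : ℝ → ℝ) (hf : ContDiff ℝ 1 f) (t0 : ℝ) (y : ℝ → ℝ)
    (hy : ∀ t, t0 ≤ t → HasDerivWithinAt y (f (y t)) (Set.Ici t0) t)
    (hpos : 0 < f (y t0)) (hbdd : ∃ C, ∀ t, t0 ≤ t → |y t| ≤ C) :
    StrictMonoOn y (Set.Ici t0) ∧
    ∃ L : ℝ, Filter.Tendsto y Filter.atTop (nhds L) ∧ f L = 0 := by
  obtain ⟨C, hC⟩ := hbdd
  have hmem : ∀ t ∈ Ici t0, y t ∈ Icc (-C) C := fun t ht ↦ abs_le.1 (hC t ht)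
  obtain ⟨K, hK⟩ := hf.contDiffOn.exists_lipschitzOnWith one_ne_zero (convex_Icc (-C) C)
    isCompact_Icc
  have hcont : ContinuousOn y (Ici t0) := fun t ht ↦ (hy t ht).continuousWithinAt
  have hfy_pos : ∀ t ∈ Ici t0, 0 < f (y t) := by
    intro t ht
    by_contra! hle
    obtain ⟨τ, hτ, hzero⟩ := isPreconnected_Ici.intermediate_value ht self_mem_Ici
      (hf.continuous.comp_continuousOn hcont) ⟨hle, hpos.le⟩
    exact apply_ne_zero_of_hasDerivWithinAt hK hy hmem hpos.ne' hτ hzero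
  have hmono : StrictMonoOn y (Ici t0) :=
    strictMonoOn_of_hasDerivWithinAt_pos (convex_Ici t0) hcont
      (fun t ht ↦ (hy t (interior_subset ht)).mono interior_subset)
      (fun t ht ↦ hfy_pos t (interior_subset ht))
  obtain ⟨L, hL⟩ := hmono.monotoneOn.exists_tendsto_atTop
    ⟨C, forall_mem_image.2 fun t ht ↦ (hmem t ht).2⟩
  refine ⟨hmono, L, hL, eq_zero_of_tendsto_of_hasDerivAt_of_tendsto ?_ hL
    ((hf.continuous.tendsto L).comp hL)⟩
  filter_upwards [eventually_gt_atTop t0] with t ht using (hy t ht.le).hasDerivAt (Ici_mem_nhds ht)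
end

section
/- Let n be a positive integer, t0 ∈ ℝ, T ∈ (t0, ∞], and let U : [t0, T) → ℝ be differentiable with U'(t) = ζ(U(t)) for all t ∈ [t0, T), where ζ(x) denotes the (real) value of the Riemann zeta function at the real point x. If U(t0) ∈ (−4n, −4n+4), then U(t) ∈ (−4n, −4n+4) for all t ∈ [t0, T); moreover, if T = ∞ then U(t) → −4n+2 as t → ∞. -/
noncomputable section

open Complex in
lemma zetaR_pos_of_one_lt {x : ℝ} (hx : 1 < x) : 0 < zetaR x := by
  have hre : 1 < (x:ℂ).re := by simpa using hx
  have hsum : Summable (fun n : ℕ => 1 / (n:ℂ) ^ (x:ℂ)) :=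
    Complex.summable_one_div_nat_cpow.mpr hre
  have key : ∀ n : ℕ, (1 / (n:ℂ) ^ (x:ℂ)) = ((1 / (n:ℝ) ^ x : ℝ) : ℂ) := by
    intro n
    rw [Complex.ofReal_div, Complex.ofReal_one, Complex.ofReal_cpow (by positivity)]
    norm_num
  have : zetaR x = ∑' n : ℕ, (1 / (n:ℝ) ^ x) := by
    rw [zetaR, zeta_eq_tsum_one_div_nat_cpow hre, Complex.re_tsum hsum]
    congr 1
    ext n
    rw [key n, Complex.ofReal_re]
  rw [this]
  have hsumR : Summable (fun n : ℕ => 1 / (n:ℝ) ^ x) :=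
    Real.summable_one_div_nat_rpow.mpr hx
  refine Summable.tsum_pos hsumR (fun n => by positivity) 1 ?_
  norm_num

open Real in
lemma zetaR_eq_of_neg {x : ℝ} (hx : x < 0) :
    zetaR x = (2 * (2*π)^(x-1) * Real.Gamma (1-x) * Real.sin (π*x/2)) * zetaR (1-x) := by
  have hs1 : (1 - x : ℝ) > 1 := by linarith
  have hs : ∀ m : ℕ, ((1-x:ℝ):ℂ) ≠ -m := by
    intro m h
    have h' : (1-x:ℝ) = -(m:ℝ) := by exact_mod_cast h
    have : (0:ℝ) ≤ (m:ℝ) := by positivity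
    linarith
  have hs' : ((1-x:ℝ):ℂ) ≠ 1 := by
    intro h
    have : (1-x:ℝ) = 1 := by exact_mod_cast h
    linarith
  have hfe := riemannZeta_one_sub hs hs'
  have h1 : (1:ℂ) - ((1-x:ℝ):ℂ) = (x:ℂ) := by push_cast; ring
  rw [h1] at hfe
  have h2 : ((2:ℂ) * π) ^ (-((1-x:ℝ):ℂ)) = (((2*π)^(x-1) : ℝ) : ℂ) := by
    rw [Complex.ofReal_cpow (by positivity)]
    push_cast
    norm_num
  have h3 : Complex.Gamma ((1-x:ℝ):ℂ) = ((Real.Gamma (1-x) : ℝ) : ℂ) :=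
    Complex.Gamma_ofReal _
  have h5 : Real.cos (π*(1-x)/2) = Real.sin (π*x/2) := by
    rw [show π*(1-x)/2 = π/2 - π*x/2 by ring, Real.cos_pi_div_two_sub]
  have h4 : Complex.cos ((π:ℂ) * ((1-x:ℝ):ℂ) / 2) = ((Real.sin (π*x/2) : ℝ) : ℂ) := by
    rw [show (π:ℂ) * ((1-x:ℝ):ℂ) / 2 = (((π*(1-x)/2 : ℝ)):ℂ) by push_cast; ring,
        ← Complex.ofReal_cos, h5]
  unfold zetaR
  rw [hfe, h2, h3, h4]
  set Z := riemannZeta ((1-x:ℝ):ℂ) with hZ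
  rw [show (2:ℂ) * (((2*π)^(x-1):ℝ):ℂ) * ((Real.Gamma (1-x) :ℝ):ℂ) * ((Real.sin (π*x/2):ℝ):ℂ) * Z
      = (((2 * (2*π)^(x-1) * Real.Gamma (1-x) * Real.sin (π*x/2) : ℝ)):ℂ) * Z by push_cast; ring]
  rw [Complex.re_ofReal_mul]

open Real in
lemma zetaR_sign_of_neg {x : ℝ} (hx : x < 0) :
    (0 < Real.sin (π*x/2) → 0 < zetaR x) ∧ (Real.sin (π*x/2) < 0 → zetaR x < 0) := by
  have hz : 0 < zetaR (1-x) := zetaR_pos_of_one_lt (by linarith)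
  have hC : 0 < 2 * (2*π)^(x-1) * Real.Gamma (1-x) := by
    have h1 : (0:ℝ) < (2*π)^(x-1) := Real.rpow_pos_of_pos (by positivity) _
    have h2 : 0 < Real.Gamma (1-x) := Real.Gamma_pos_of_pos (by linarith)
    positivity
  rw [zetaR_eq_of_neg hx]
  constructor <;> intro h
  · exact mul_pos (mul_pos hC h) hz
  · exact mul_neg_of_neg_of_pos (mul_neg_of_pos_of_neg hC h) hz

open Real in
lemma zetaR_pos_on (n : ℕ) (hn : 0 < n) {x : ℝ} (h1 : -(4*(n:ℝ)) < x) (h2 : x < -(4*(n:ℝ))+2) :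
    0 < zetaR x := by
  have hn' : (1:ℝ) ≤ n := by exact_mod_cast hn
  have hx0 : x < 0 := by linarith
  refine (zetaR_sign_of_neg hx0).1 ?_
  have hper : Real.sin (π*x/2) = Real.sin (π*x/2 + (n:ℤ)*(2*π)) :=
    (Real.sin_add_int_mul_two_pi _ _).symm
  rw [hper]
  have harg : π*x/2 + (n:ℤ)*(2*π) = π*(x+4*n)/2 := by push_cast; ring
  rw [harg]
  have h0 : 0 < x + 4*n := by linarith
  have h2' : x + 4*n < 2 := by linarith
  refine Real.sin_pos_of_pos_of_lt_pi (by positivity) ?_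
  nlinarith [Real.pi_pos]

open Real in
lemma zetaR_neg_on (n : ℕ) (hn : 0 < n) {x : ℝ} (h1 : -(4*(n:ℝ))+2 < x) (h2 : x < -(4*(n:ℝ))+4) :
    zetaR x < 0 := by
  have hn' : (1:ℝ) ≤ n := by exact_mod_cast hn
  have hx0 : x < 0 := by linarith
  refine (zetaR_sign_of_neg hx0).2 ?_
  have hper : Real.sin (π*x/2) = Real.sin (π*x/2 + (n:ℤ)*(2*π)) :=
    (Real.sin_add_int_mul_two_pi _ _).symm
  rw [hper]
  have harg : π*x/2 + (n:ℤ)*(2*π) = π*(x+4*n)/2 - π + π := by push_cast; ring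
  rw [harg]
  rw [show π*(x+4*n)/2 - π + π = (π*(x+4*n)/2 - π) + π by ring, Real.sin_add_pi]
  have hpos : 0 < Real.sin (π*(x+4*n)/2 - π) := by
    have h0 : 2 < x + 4*n := by linarith
    have h2' : x + 4*n < 4 := by linarith
    refine Real.sin_pos_of_pos_of_lt_pi ?_ ?_
    · nlinarith [Real.pi_pos]
    · nlinarith [Real.pi_pos]
  linarith

lemma zetaR_mid (n : ℕ) (hn : 0 < n) : zetaR (-(4*(n:ℝ))+2) = 0 := by
  have h : ((-(4*(n:ℝ))+2 : ℝ) : ℂ) = -2 * (((2*n-2 : ℕ) : ℂ) + 1) := by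
    have h2 : (2:ℕ) ≤ 2*n := by omega
    push_cast [Nat.cast_sub h2]
    ring
  rw [zetaR, h, riemannZeta_neg_two_mul_nat_add_one]
  simp

lemma slope_lemma (t0 : ℝ) (T : EReal) (U : ℝ → ℝ)
    (hU : ∀ t : ℝ, t0 ≤ t → (t : EReal) < T →
      HasDerivWithinAt U (zetaR (U t)) {τ : ℝ | t0 ≤ τ ∧ (τ : EReal) < T} t)
    {t1 t2 : ℝ} (h1 : t0 ≤ t1) (h2 : (t2 : EReal) < T) (h12 : t1 < t2) :
    ∃ c ∈ Set.Ioo t1 t2, zetaR (U c) = (U t2 - U t1) / (t2 - t1) := by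
  set S := {τ : ℝ | t0 ≤ τ ∧ (τ : EReal) < T} with hS
  have hsub : Set.Icc t1 t2 ⊆ S := fun τ hτ =>
    ⟨le_trans h1 hτ.1, lt_of_le_of_lt (EReal.coe_le_coe_iff.mpr hτ.2) h2⟩
  have hcont : ContinuousOn U (Set.Icc t1 t2) := fun τ hτ =>
    ((hU τ (hsub hτ).1 (hsub hτ).2).continuousWithinAt).mono hsub
  have hderiv : ∀ τ ∈ Set.Ioo t1 t2, HasDerivAt U (zetaR (U τ)) τ := by
    intro τ hτ
    have hτS := hsub (Set.Ioo_subset_Icc_self hτ)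
    refine (hU τ hτS.1 hτS.2).hasDerivAt ?_
    exact mem_nhds_iff.mpr
      ⟨Set.Ioo t1 t2, fun y hy => hsub (Set.Ioo_subset_Icc_self hy), isOpen_Ioo, hτ⟩
  obtain ⟨c, hc, hceq⟩ := exists_hasDerivAt_eq_slope U (fun τ => zetaR (U τ)) h12 hcont hderiv
  exact ⟨c, hc, hceq⟩

lemma zetaR_contAt {x : ℝ} (h : x < 1) : ContinuousAt zetaR x := by
  have h1 : (x:ℂ) ≠ 1 := by
    intro he
    have : x = 1 := by exact_mod_cast he
    linarith
  have h2 := (differentiableAt_riemannZeta h1).continuousAt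
  exact Complex.continuous_re.continuousAt.comp
    (h2.comp Complex.continuous_ofReal.continuousAt)

theorem stmt16 (n : ℕ) (hn : 0 < n) (t0 : ℝ) (T : EReal) (hT : (t0 : EReal) < T)
    (U : ℝ → ℝ)
    (hU : ∀ t : ℝ, t0 ≤ t → (t : EReal) < T →
      HasDerivWithinAt U (zetaR (U t)) {τ : ℝ | t0 ≤ τ ∧ (τ : EReal) < T} t)
    (h0 : U t0 ∈ Set.Ioo (-(4 * (n : ℝ))) (-(4 * (n : ℝ)) + 4)) :
    (∀ t : ℝ, t0 ≤ t → (t : EReal) < T →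
      U t ∈ Set.Ioo (-(4 * (n : ℝ))) (-(4 * (n : ℝ)) + 4)) ∧
    (T = ⊤ → Filter.Tendsto U Filter.atTop (nhds (-(4 * (n : ℝ)) + 2))) := by
  have zpos : ∀ x : ℝ, -(4*(n:ℝ)) < x → x < -(4*(n:ℝ))+2 → 0 < zetaR x :=
    fun x h1 h2 => zetaR_pos_on n hn h1 h2
  have zneg : ∀ x : ℝ, -(4*(n:ℝ))+2 < x → x < -(4*(n:ℝ))+4 → zetaR x < 0 :=
    fun x h1 h2 => zetaR_neg_on n hn h1 h2
  have znonneg : ∀ x : ℝ, -(4*(n:ℝ)) < x → x ≤ -(4*(n:ℝ))+2 → 0 ≤ zetaR x := by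
    intro x h1 h2
    rcases lt_or_eq_of_le h2 with h | h
    · exact (zpos x h1 h).le
    · rw [h, zetaR_mid n hn]
  have znonpos : ∀ x : ℝ, -(4*(n:ℝ))+2 ≤ x → x < -(4*(n:ℝ))+4 → zetaR x ≤ 0 := by
    intro x h1 h2
    rcases lt_or_eq_of_le h1 with h | h
    · exact (zneg x h h2).le
    · rw [← h, zetaR_mid n hn]
  obtain ⟨hA0, hB0⟩ := h0
  -- PART 1 : invariance
  have part1 : ∀ t : ℝ, t0 ≤ t → (t : EReal) < T →
      -(4*(n:ℝ)) < U t ∧ U t < -(4*(n:ℝ))+4 := by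
    intro t2 ht2a ht2b
    by_contra hbad
    rw [not_and_or, not_lt, not_lt] at hbad
    have hcont2 : ContinuousOn U (Set.Icc t0 t2) := by
      intro τ hτ
      have hτT : (τ : EReal) < T := lt_of_le_of_lt (EReal.coe_le_coe_iff.mpr hτ.2) ht2b
      exact ((hU τ hτ.1 hτT).continuousWithinAt).mono
        (fun y hy => ⟨hy.1, lt_of_le_of_lt (EReal.coe_le_coe_iff.mpr hy.2) ht2b⟩)
    set B := Set.Icc t0 t2 ∩ U ⁻¹' (Set.Iic (-(4*(n:ℝ))) ∪ Set.Ici (-(4*(n:ℝ))+4)) with hBdef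
    have hBclosed : IsClosed B :=
      hcont2.preimage_isClosed_of_isClosed isClosed_Icc (isClosed_Iic.union isClosed_Ici)
    have hBne : B.Nonempty := ⟨t2, ⟨ht2a, le_refl _⟩, by
      rcases hbad with h | h
      · exact Or.inl h
      · exact Or.inr h⟩
    have hBbdd : BddBelow B := ⟨t0, fun y hy => hy.1.1⟩
    set s := sInf B with hsdef
    have hsB : s ∈ B := hBclosed.csInf_mem hBne hBbdd
    have hs0 : t0 < s := by
      rcases lt_or_eq_of_le hsB.1.1 with h | h
      · exact h
      · exfalso
        rcases hsB.2 with h' | h' <;> rw [← h] at h' <;> simp only [Set.mem_Iic, Set.mem_Ici] at h' <;> linarith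
    have hgood : ∀ t, t0 ≤ t → t < s → -(4*(n:ℝ)) < U t ∧ U t < -(4*(n:ℝ))+4 := by
      intro t ht ht'
      by_contra hc
      rw [not_and_or, not_lt, not_lt] at hc
      have htB : t ∈ B := ⟨⟨ht, le_trans ht'.le hsB.1.2⟩, by
        rcases hc with h | h
        · exact Or.inl h
        · exact Or.inr h⟩
      exact absurd (csInf_le hBbdd htB) (not_le.mpr ht')
    -- continuity at s : extract δ
    have hcs : ContinuousWithinAt U (Set.Icc t0 t2) s := hcont2 s hsB.1
    obtain ⟨δ, hδpos, hδ⟩ := Metric.continuousWithinAt_iff.mp hcs 2 (by norm_num)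
    set t1 := max t0 (s - δ/2) with ht1def
    have ht1lt : t1 < s := max_lt hs0 (by linarith)
    have ht1a : t0 ≤ t1 := le_max_left _ _
    have hP1 := hgood t1 ht1a ht1lt
    have hclose : ∀ t, t1 ≤ t → t ≤ s → |U t - U s| < 2 := by
      intro t h h'
      have htIcc : t ∈ Set.Icc t0 t2 := ⟨le_trans ht1a h, le_trans h' hsB.1.2⟩
      have hdist : dist t s < δ := by
        rw [Real.dist_eq, abs_of_nonpos (by linarith)]
        have : s - δ/2 ≤ t1 := le_max_right _ _
        linarith
      have := hδ htIcc hdist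
      rwa [Real.dist_eq] at this
    have hsT : (s : EReal) < T := lt_of_le_of_lt (EReal.coe_le_coe_iff.mpr hsB.1.2) ht2b
    obtain ⟨c, hc, hceq⟩ := slope_lemma t0 T U hU ht1a hsT ht1lt
    have hPc := hgood c (le_trans ht1a hc.1.le) hc.2
    have hUc_close := hclose c hc.1.le hc.2.le
    rw [abs_lt] at hUc_close
    have hst1 : 0 < s - t1 := by linarith
    rcases hsB.2 with h | h
    · simp only [Set.mem_Iic] at h
      have h1 : U c < -(4*(n:ℝ))+2 := by linarith [hUc_close.2]
      have hposc := zpos (U c) hPc.1 h1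
      rw [hceq] at hposc
      have : (U s - U t1) / (s - t1) < 0 := div_neg_of_neg_of_pos (by linarith [hP1.1]) hst1
      linarith
    · simp only [Set.mem_Ici] at h
      have h1 : -(4*(n:ℝ))+2 < U c := by linarith [hUc_close.1]
      have hnegc := zneg (U c) h1 hPc.2
      rw [hceq] at hnegc
      have : 0 < (U s - U t1) / (s - t1) := div_pos (by linarith [hP1.2]) hst1
      linarith
  refine ⟨fun t ht ht' => Set.mem_Ioo.mpr (part1 t ht ht'), ?_⟩
  -- PART 2 : convergence when T = ⊤
  intro hTop
  subst hTop
  have hltT : ∀ t : ℝ, (t : EReal) < ⊤ := fun t => EReal.coe_lt_top t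
  have hIn : ∀ t, t0 ≤ t → -(4*(n:ℝ)) < U t ∧ U t < -(4*(n:ℝ))+4 :=
    fun t ht => part1 t ht (hltT t)
  have slope' : ∀ t1 t2 : ℝ, t0 ≤ t1 → t1 < t2 →
      ∃ c ∈ Set.Ioo t1 t2, zetaR (U c) = (U t2 - U t1) / (t2 - t1) :=
    fun t1 t2 h1 h12 => slope_lemma t0 ⊤ U hU h1 (hltT t2) h12
  -- continuity on any Icc inside [t0,∞)
  have hcontI : ∀ t1 t2 : ℝ, t0 ≤ t1 → ContinuousOn U (Set.Icc t1 t2) := by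
    intro t1 t2 h1
    intro τ hτ
    exact ((hU τ (le_trans h1 hτ.1) (hltT τ)).continuousWithinAt).mono
      (fun y hy => ⟨le_trans h1 hy.1, hltT y⟩)
  -- (i) : below the midline is forward invariant
  have inv_le : ∀ t1, t0 ≤ t1 → U t1 ≤ -(4*(n:ℝ))+2 → ∀ t2, t1 ≤ t2 → U t2 ≤ -(4*(n:ℝ))+2 := by
    intro t1 h1 hU1 t2 h12
    by_contra hc
    push_neg at hc
    have h12' : t1 < t2 := by
      rcases lt_or_eq_of_le h12 with h | h
      · exact h
      · exfalso; rw [h] at hU1; linarith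
    set B := Set.Icc t1 t2 ∩ U ⁻¹' (Set.Iic (-(4*(n:ℝ))+2)) with hBdef
    have hBclosed : IsClosed B :=
      (hcontI t1 t2 h1).preimage_isClosed_of_isClosed isClosed_Icc isClosed_Iic
    have hBne : B.Nonempty := ⟨t1, ⟨le_refl _, h12⟩, hU1⟩
    have hBbdd : BddAbove B := ⟨t2, fun y hy => hy.1.2⟩
    set s := sSup B with hsdef
    have hsB : s ∈ B := hBclosed.csSup_mem hBne hBbdd
    have hst2 : s < t2 := by
      rcases lt_or_eq_of_le hsB.1.2 with h | h
      · exact h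
      · exfalso; have := hsB.2; rw [h] at this; simp only [Set.mem_preimage, Set.mem_Iic] at this; linarith
    obtain ⟨c, hcmem, hceq⟩ := slope' s t2 (le_trans h1 hsB.1.1) hst2
    have hcgt : -(4*(n:ℝ))+2 < U c := by
      by_contra hcc
      push_neg at hcc
      have : c ∈ B := ⟨⟨le_trans hsB.1.1 hcmem.1.le, hcmem.2.le⟩, hcc⟩
      exact absurd (le_csSup hBbdd this) (not_le.mpr hcmem.1)
    have hclt : U c < -(4*(n:ℝ))+4 := (hIn c (le_trans h1 (le_trans hsB.1.1 hcmem.1.le))).2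
    have hnegc := zneg (U c) hcgt hclt
    rw [hceq] at hnegc
    have hUs : U s ≤ -(4*(n:ℝ))+2 := hsB.2
    have : 0 < (U t2 - U s) / (t2 - s) := div_pos (by linarith) (by linarith)
    linarith
  -- (ii) : above the midline is forward invariant
  have inv_ge : ∀ t1, t0 ≤ t1 → -(4*(n:ℝ))+2 ≤ U t1 → ∀ t2, t1 ≤ t2 → -(4*(n:ℝ))+2 ≤ U t2 := by
    intro t1 h1 hU1 t2 h12
    by_contra hc
    push_neg at hc
    have h12' : t1 < t2 := by
      rcases lt_or_eq_of_le h12 with h | h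
      · exact h
      · exfalso; rw [h] at hU1; linarith
    set B := Set.Icc t1 t2 ∩ U ⁻¹' (Set.Ici (-(4*(n:ℝ))+2)) with hBdef
    have hBclosed : IsClosed B :=
      (hcontI t1 t2 h1).preimage_isClosed_of_isClosed isClosed_Icc isClosed_Ici
    have hBne : B.Nonempty := ⟨t1, ⟨le_refl _, h12⟩, hU1⟩
    have hBbdd : BddAbove B := ⟨t2, fun y hy => hy.1.2⟩
    set s := sSup B with hsdef
    have hsB : s ∈ B := hBclosed.csSup_mem hBne hBbdd
    have hst2 : s < t2 := by
      rcases lt_or_eq_of_le hsB.1.2 with h | h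
      · exact h
      · exfalso; have := hsB.2; rw [h] at this; simp only [Set.mem_preimage, Set.mem_Ici] at this; linarith
    obtain ⟨c, hcmem, hceq⟩ := slope' s t2 (le_trans h1 hsB.1.1) hst2
    have hclt : U c < -(4*(n:ℝ))+2 := by
      by_contra hcc
      push_neg at hcc
      have : c ∈ B := ⟨⟨le_trans hsB.1.1 hcmem.1.le, hcmem.2.le⟩, hcc⟩
      exact absurd (le_csSup hBbdd this) (not_le.mpr hcmem.1)
    have hcgt : -(4*(n:ℝ)) < U c := (hIn c (le_trans h1 (le_trans hsB.1.1 hcmem.1.le))).1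
    have hposc := zpos (U c) hcgt hclt
    rw [hceq] at hposc
    have hUs : -(4*(n:ℝ))+2 ≤ U s := hsB.2
    have : (U t2 - U s) / (t2 - s) < 0 := div_neg_of_neg_of_pos (by linarith) (by linarith)
    linarith
  -- monotone convergence, case split on position relative to the midline
  rcases le_or_gt (U t0) (-(4*(n:ℝ))+2) with hcase | hcase
  · -- below midline : U is nondecreasing and bounded above
    have Ub : ∀ t, t0 ≤ t → U t ≤ -(4*(n:ℝ))+2 := fun t ht => inv_le t0 le_rfl hcase t ht
    have mono : ∀ t1 t2, t0 ≤ t1 → t1 ≤ t2 → U t1 ≤ U t2 := by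
      intro t1 t2 h1 h12
      rcases lt_or_eq_of_le h12 with h12' | h12'
      · obtain ⟨c, hcmem, hceq⟩ := slope' t1 t2 h1 h12'
        have hc0 : t0 ≤ c := le_trans h1 hcmem.1.le
        have hz : 0 ≤ zetaR (U c) := znonneg (U c) (hIn c hc0).1 (Ub c hc0)
        have := (eq_div_iff (by linarith : t2 - t1 ≠ 0)).mp hceq
        nlinarith
      · rw [h12']
    set W : ℝ → ℝ := fun t => U (max t t0) with hW
    have hWU : ∀ t, t0 ≤ t → W t = U t := fun t ht => by
      simp only [hW]; rw [max_eq_left ht]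
    have hWmono : Monotone W := fun x y hxy =>
      mono _ _ (le_max_right _ _) (max_le_max hxy le_rfl)
    have hWbdd : BddAbove (Set.range W) := by
      refine ⟨-(4*(n:ℝ))+2, ?_⟩
      rintro y ⟨t, rfl⟩
      exact Ub _ (le_max_right _ _)
    have htend := tendsto_atTop_ciSup hWmono hWbdd
    set L := ⨆ t, W t with hLdef
    have hWleL : ∀ t, W t ≤ L := fun t => le_ciSup hWbdd t
    have hLle : L ≤ -(4*(n:ℝ))+2 := ciSup_le (fun t => Ub _ (le_max_right _ _))
    have hLgt : -(4*(n:ℝ)) < L := by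
      have h1 := hWleL t0
      rw [hWU t0 le_rfl] at h1
      linarith
    have hLm : L = -(4*(n:ℝ))+2 := by
      by_contra hne
      have hL : L < -(4*(n:ℝ))+2 := lt_of_le_of_ne hLle hne
      have hζL : 0 < zetaR L := zpos L hLgt hL
      set ε := zetaR L / 2 with hεdef
      have hε : 0 < ε := by positivity
      have hcont := zetaR_contAt (show L < 1 by have h9 : (1:ℝ) ≤ n := Nat.one_le_cast.mpr hn; linarith)
      obtain ⟨δ, hδpos, hδ⟩ := Metric.continuousAt_iff.mp hcont ε hε
      obtain ⟨t1, ht1⟩ := exists_lt_of_lt_ciSup (show L - δ < L by linarith)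
      set t1' := max t1 t0 with ht1'def
      have ht1'0 : t0 ≤ t1' := le_max_right _ _
      have hU1 : L - δ < U t1' := by
        have := hWmono (le_max_left t1 t0)
        rw [hWU t1' ht1'0] at this
        linarith
      have hU1L : U t1' ≤ L := by have := hWleL t1'; rwa [hWU t1' ht1'0] at this
      set t2 := t1' + ((-(4*(n:ℝ))+2) - U t1')/ε + 1 with ht2def
      have hnum : 0 ≤ (-(4*(n:ℝ))+2) - U t1' := by linarith [Ub t1' ht1'0]
      have ht12 : t1' < t2 := by
        have : 0 ≤ ((-(4*(n:ℝ))+2) - U t1')/ε := div_nonneg hnum hε.le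
        simp only [ht2def]; linarith
      obtain ⟨c, hcmem, hceq⟩ := slope' t1' t2 ht1'0 ht12
      have hc0 : t0 ≤ c := le_trans ht1'0 hcmem.1.le
      have hUc1 : U t1' ≤ U c := mono t1' c ht1'0 hcmem.1.le
      have hUcL : U c ≤ L := by have := hWleL c; rwa [hWU c hc0] at this
      have hδc : dist (U c) L < δ := by
        rw [Real.dist_eq, abs_of_nonpos (by linarith)]
        linarith
      have hζc : ε < zetaR (U c) := by
        have := hδ hδc
        rw [Real.dist_eq, abs_lt] at this
        simp only [hεdef] at *
        linarith [this.1]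
      have hkey := (eq_div_iff (by linarith : t2 - t1' ≠ 0)).mp hceq
      have hεd : ε * (((-(4*(n:ℝ))+2) - U t1')/ε) = (-(4*(n:ℝ))+2) - U t1' :=
        mul_div_cancel₀ _ hε.ne'
      have hd : t2 - t1' = ((-(4*(n:ℝ))+2) - U t1')/ε + 1 := by simp only [ht2def]; ring
      have hUb2 := Ub t2 (le_trans ht1'0 ht12.le)
      have h5 : ε * (t2 - t1') = (-(4*(n:ℝ))+2 - U t1') + ε := by
        rw [hd, mul_add, hεd, mul_one]
      have h6 := mul_lt_mul_of_pos_right hζc (show (0:ℝ) < t2 - t1' by linarith)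
      linarith
    have heq : W =ᶠ[Filter.atTop] U :=
      Filter.eventually_atTop.mpr ⟨t0, fun t ht => hWU t ht⟩
    exact Filter.Tendsto.congr' heq (hLm ▸ htend)
  · -- above midline : U is nonincreasing and bounded below
    have Lb : ∀ t, t0 ≤ t → -(4*(n:ℝ))+2 ≤ U t := fun t ht => inv_ge t0 le_rfl hcase.le t ht
    have anti : ∀ t1 t2, t0 ≤ t1 → t1 ≤ t2 → U t2 ≤ U t1 := by
      intro t1 t2 h1 h12
      rcases lt_or_eq_of_le h12 with h12' | h12'
      · obtain ⟨c, hcmem, hceq⟩ := slope' t1 t2 h1 h12'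
        have hc0 : t0 ≤ c := le_trans h1 hcmem.1.le
        have hz : zetaR (U c) ≤ 0 := znonpos (U c) (Lb c hc0) (hIn c hc0).2
        have := (eq_div_iff (by linarith : t2 - t1 ≠ 0)).mp hceq
        nlinarith
      · rw [h12']
    set W : ℝ → ℝ := fun t => U (max t t0) with hW
    have hWU : ∀ t, t0 ≤ t → W t = U t := fun t ht => by
      simp only [hW]; rw [max_eq_left ht]
    have hWanti : Antitone W := fun x y hxy =>
      anti _ _ (le_max_right _ _) (max_le_max hxy le_rfl)
    have hWbdd : BddBelow (Set.range W) := by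
      refine ⟨-(4*(n:ℝ))+2, ?_⟩
      rintro y ⟨t, rfl⟩
      exact Lb _ (le_max_right _ _)
    have htend := tendsto_atTop_ciInf hWanti hWbdd
    set L := ⨅ t, W t with hLdef
    have hWgeL : ∀ t, L ≤ W t := fun t => ciInf_le hWbdd t
    have hLge : -(4*(n:ℝ))+2 ≤ L := le_ciInf (fun t => Lb _ (le_max_right _ _))
    have hLlt : L < -(4*(n:ℝ))+4 := by
      have h1 := hWgeL t0
      rw [hWU t0 le_rfl] at h1
      linarith [(hIn t0 le_rfl).2]
    have hLm : L = -(4*(n:ℝ))+2 := by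
      by_contra hne
      have hL : -(4*(n:ℝ))+2 < L := lt_of_le_of_ne hLge (Ne.symm hne)
      have hζL : zetaR L < 0 := zneg L hL hLlt
      set ε := -zetaR L / 2 with hεdef
      have hε : 0 < ε := by simp only [hεdef]; linarith
      have hcont := zetaR_contAt (show L < 1 by have h9 : (1:ℝ) ≤ n := Nat.one_le_cast.mpr hn; linarith)
      obtain ⟨δ, hδpos, hδ⟩ := Metric.continuousAt_iff.mp hcont ε hε
      obtain ⟨t1, ht1⟩ := exists_lt_of_ciInf_lt (show L < L + δ by linarith)
      set t1' := max t1 t0 with ht1'def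
      have ht1'0 : t0 ≤ t1' := le_max_right _ _
      have hU1 : U t1' < L + δ := by
        have := hWanti (le_max_left t1 t0)
        rw [hWU t1' ht1'0] at this
        linarith
      have hU1L : L ≤ U t1' := by have := hWgeL t1'; rwa [hWU t1' ht1'0] at this
      set t2 := t1' + (U t1' - (-(4*(n:ℝ))+2))/ε + 1 with ht2def
      have hnum : 0 ≤ U t1' - (-(4*(n:ℝ))+2) := by linarith [Lb t1' ht1'0]
      have ht12 : t1' < t2 := by
        have : 0 ≤ (U t1' - (-(4*(n:ℝ))+2))/ε := div_nonneg hnum hε.le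
        simp only [ht2def]; linarith
      obtain ⟨c, hcmem, hceq⟩ := slope' t1' t2 ht1'0 ht12
      have hc0 : t0 ≤ c := le_trans ht1'0 hcmem.1.le
      have hUc1 : U c ≤ U t1' := anti t1' c ht1'0 hcmem.1.le
      have hUcL : L ≤ U c := by have := hWgeL c; rwa [hWU c hc0] at this
      have hδc : dist (U c) L < δ := by
        rw [Real.dist_eq, abs_of_nonneg (by linarith)]
        linarith
      have hζc : zetaR (U c) < -ε := by
        have := hδ hδc
        rw [Real.dist_eq, abs_lt] at this
        simp only [hεdef] at *
        linarith [this.2]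
      have hkey := (eq_div_iff (by linarith : t2 - t1' ≠ 0)).mp hceq
      have hεd : ε * ((U t1' - (-(4*(n:ℝ))+2))/ε) = U t1' - (-(4*(n:ℝ))+2) :=
        mul_div_cancel₀ _ hε.ne'
      have hd : t2 - t1' = (U t1' - (-(4*(n:ℝ))+2))/ε + 1 := by simp only [ht2def]; ring
      have hLb2 := Lb t2 (le_trans ht1'0 ht12.le)
      have h5 : ε * (t2 - t1') = (U t1' - (-(4*(n:ℝ))+2)) + ε := by
        rw [hd, mul_add, hεd, mul_one]
      have h6 := mul_lt_mul_of_pos_right hζc (show (0:ℝ) < t2 - t1' by linarith)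
      linarith
    have heq : W =ᶠ[Filter.atTop] U :=
      Filter.eventually_atTop.mpr ⟨t0, fun t ht => hWU t ht⟩
    exact Filter.Tendsto.congr' heq (hLm ▸ htend)
end
end

section
/- Let n be a positive integer, t0 ∈ ℝ, T ∈ (t0, ∞], and let U : [t0, T) → ℝ be differentiable with U'(t) = −ζ(U(t)) for all t ∈ [t0, T), where ζ(x) denotes the (real) value of the Riemann zeta function at the real point x. If U(t0) ∈ (−4n−2, −4n+2), then U(t) ∈ (−4n−2, −4n+2) for all t ∈ [t0, T); moreover, if T = ∞ then U(t) → −4n as t → ∞. -/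
noncomputable section

open Real Set Filter Topology
open scoped ComplexOrder

/-!
For `x < 0` the functional equation writes `ζ(x)` as a positive factor times `sin (π x / 2)`, so on
`(-4n - 2, -4n + 2)` the sign of `ζ(x)` is that of `x + 4n`: the trivial zero `a = -4n` is an
attracting equilibrium of `U' = -ζ(U)`. Hence `(U - a)²` cannot cross any level `r²` with
`0 < r < 2` upwards, which traps the solution and makes `|U - a|` nonincreasing. If `|U - a|` stayed above
some `ε > 0`, compactness of `{ε ≤ |x - a| ≤ |U t₀ - a|}` would give a uniform rate `c > 0` with
`(U - a)²' ≤ -2c`, and `(U - a)²` would eventually become negative.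
-/

lemma zetaR_eq_mul_sin {x : ℝ} (hx : x < 0) : ∃ c > 0, zetaR x = c * sin (π * x / 2) := by
  obtain ⟨s, rfl⟩ : ∃ s : ℝ, x = 1 - s := ⟨1 - x, by ring⟩
  have hs : 1 < s := by linarith
  have hfe := riemannZeta_one_sub (s := (s : ℂ))
    (fun n h => by
      have := congrArg Complex.re h
      simp only [Complex.ofReal_re, Complex.neg_re, Complex.natCast_re] at this
      linarith [n.cast_nonneg (α := ℝ)])
    (by exact_mod_cast hs.ne')
  set P : ℂ := 2 * (2 * π) ^ (-(s : ℂ)) * Complex.Gamma s * riemannZeta s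
  have hpow : (0 : ℂ) < (2 * π) ^ (-(s : ℂ)) := by
    rw [show (2 * π : ℂ) = ((2 * π : ℝ) : ℂ) by push_cast; ring,
      show -(s : ℂ) = ((-s : ℝ) : ℂ) by push_cast; ring, ← Complex.ofReal_cpow (by positivity)]
    exact Complex.zero_lt_real.2 (by positivity)
  have hGamma : (0 : ℂ) < Complex.Gamma s :=
    Complex.Gamma_ofReal s ▸ Complex.zero_lt_real.2 (Gamma_pos_of_pos (by linarith))
  have hP : 0 < P := mul_pos (mul_pos (mul_pos two_pos hpow) hGamma) (riemannZeta_pos_of_one_lt hs)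
  have hcos : Complex.cos (π * s / 2) = ((sin (π * (1 - s) / 2) : ℝ) : ℂ) := by
    rw [show π * (1 - s) / 2 = π / 2 - π * s / 2 by ring, sin_pi_div_two_sub, Complex.ofReal_cos]
    push_cast
    ring_nf
  refine ⟨P.re, (Complex.pos_iff.1 hP).1, ?_⟩
  rw [zetaR, Complex.ofReal_sub, Complex.ofReal_one, hfe,
    show 2 * (2 * π) ^ (-(s : ℂ)) * Complex.Gamma s * Complex.cos (π * s / 2) * riemannZeta s
      = P * Complex.cos (π * s / 2) by ring, hcos, Complex.re_mul_ofReal]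

lemma mul_sin_pos {θ : ℝ} (h0 : 0 < |θ|) (hπ : |θ| < π) : 0 < θ * sin θ := by
  rcases lt_or_gt_of_ne (abs_pos.1 h0) with hθ | hθ
  · rw [abs_of_neg hθ] at hπ
    have := sin_pos_of_pos_of_lt_pi (neg_pos.2 hθ) hπ
    rw [sin_neg] at this
    nlinarith
  · rw [abs_of_pos hθ] at hπ
    exact mul_pos hθ (sin_pos_of_pos_of_lt_pi hθ hπ)

lemma add_mul_zetaR_pos {n : ℕ} (hn : 0 < n) {x : ℝ} (h0 : 0 < |x + 4 * n|)
    (h2 : |x + 4 * n| < 2) : 0 < (x + 4 * n) * zetaR x := by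
  have hn1 : (1 : ℝ) ≤ n := by exact_mod_cast hn
  obtain ⟨c, hc, hζ⟩ := zetaR_eq_mul_sin (x := x) (by linarith [(abs_lt.1 h2).2])
  set θ := π * (x + 4 * n) / 2 with hθ_def
  have hsin : sin (π * x / 2) = sin θ := by
    rw [show θ = π * x / 2 + n * (2 * π) by ring, sin_add_nat_mul_two_pi]
  have habs : |θ| = π / 2 * |x + 4 * n| := by
    rw [show θ = π / 2 * (x + 4 * n) by ring, abs_mul, abs_of_pos (by positivity)]
  have hθ : 0 < θ * sin θ :=
    mul_sin_pos (habs ▸ by positivity) (habs ▸ by nlinarith [pi_pos])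
  have : (x + 4 * n) * zetaR x = 2 * c / π * (θ * sin θ) := by
    rw [hζ, hsin, hθ_def]
    field_simp
  rw [this]
  positivity

lemma continuousAt_zetaR {x : ℝ} (hx : x ≠ 1) : ContinuousAt zetaR x :=
  Complex.continuous_re.continuousAt.comp <|
    (differentiableAt_riemannZeta (by exact_mod_cast hx)).continuousAt.comp
      Complex.continuous_ofReal.continuousAt

lemma Icc_mem_nhdsGE_of_mem_Ico {s t τ : ℝ} (h : τ ∈ Ico s t) : Icc s t ∈ 𝓝[≥] τ :=
  mem_of_superset (Icc_mem_nhdsGE h.2) (Icc_subset_Icc_left h.1)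

lemma HasDerivWithinAt.sub_const_sq {U : ℝ → ℝ} {u a τ : ℝ} {S : Set ℝ}
    (h : HasDerivWithinAt U u S τ) :
    HasDerivWithinAt (fun t => (U t - a) ^ 2) (2 * (U τ - a) * u) S τ := by
  simpa using (h.sub_const a).fun_pow 2

section AttractingZero

variable {g : ℝ → ℝ} {a R : ℝ} {U : ℝ → ℝ}

lemma abs_sub_le_of_hasDerivWithinAt_Icc
    (hg : ∀ x, 0 < |x - a| → |x - a| < R → 0 < (x - a) * g x) {s t : ℝ}
    (hU : ∀ τ ∈ Icc s t, HasDerivWithinAt U (-g (U τ)) (Icc s t) τ) (hs : |U s - a| < R) :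
    ∀ τ ∈ Icc s t, |U τ - a| ≤ |U s - a| := by
  intro τ hτ
  by_contra! hτs
  obtain ⟨r, hsr, hr⟩ := exists_between (lt_min hτs hs)
  have hr0 : 0 < r := (abs_nonneg _).trans_lt hsr
  have hsq : (U τ - a) ^ 2 ≤ r ^ 2 := by
    refine image_le_of_deriv_right_lt_deriv_boundary (B := fun _ => r ^ 2) (B' := 0)
      (fun τ hτ => ((hU τ hτ).sub_const_sq (a := a)).continuousWithinAt)
      (fun τ hτ => ((hU τ (Ico_subset_Icc_self hτ)).sub_const_sq).mono_of_mem_nhdsWithin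
        (Icc_mem_nhdsGE_of_mem_Ico hτ))
      (sq_le_sq.2 (by rw [abs_of_pos hr0]; exact hsr.le))
      (fun _ => hasDerivAt_const _ _) (fun x _ hx => ?_) hτ
    have hxr : |U x - a| = r := abs_of_pos hr0 ▸ (sq_eq_sq_iff_abs_eq_abs _ _).1 hx
    have := hg (U x) (hxr ▸ hr0) (hxr ▸ hr.trans_le (min_le_right _ _))
    simp only [Pi.zero_apply]
    linarith
  have := abs_of_pos hr0 ▸ sq_le_sq.1 hsq
  linarith [min_le_left |U τ - a| R]

lemma antitoneOn_abs_sub_of_hasDerivWithinAt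
    (hg : ∀ x, 0 < |x - a| → |x - a| < R → 0 < (x - a) * g x) {S : Set ℝ} (hS : S.OrdConnected)
    {t₀ : ℝ} (ht₀ : IsLeast S t₀) (hU : ∀ t ∈ S, HasDerivWithinAt U (-g (U t)) S t)
    (h₀ : |U t₀ - a| < R) : AntitoneOn (fun t => |U t - a|) S := by
  have decay : ∀ s ∈ S, ∀ t ∈ S, s ≤ t → |U s - a| < R → |U t - a| ≤ |U s - a| :=
    fun s hs t ht hst hsR => abs_sub_le_of_hasDerivWithinAt_Icc hg
      (fun τ hτ => (hU τ (hS.out hs ht hτ)).mono (hS.out hs ht)) hsR t ⟨hst, le_rfl⟩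
  intro s hs t ht hst
  exact decay s hs t ht hst ((decay t₀ ht₀.1 s hs (ht₀.2 hs) h₀).trans_lt h₀)

lemma exists_pos_le_sub_mul_of_le_abs_sub
    (hg : ∀ x, 0 < |x - a| → |x - a| < R → 0 < (x - a) * g x)
    (hgc : ∀ x, |x - a| < R → ContinuousAt g x) {ε ρ : ℝ} (hε : 0 < ε) (hρ : ρ < R) :
    ∃ c > 0, ∀ x, ε ≤ |x - a| → |x - a| ≤ ρ → c ≤ (x - a) * g x := by
  have hK : IsCompact (Metric.closedBall a ρ \ Metric.ball a ε) :=
    (isCompact_closedBall _ _).diff Metric.isOpen_ball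
  have hmem : ∀ x, x ∈ Metric.closedBall a ρ \ Metric.ball a ε ↔ |x - a| ≤ ρ ∧ ε ≤ |x - a| := by
    simp [Real.dist_eq]
  obtain ⟨c, hc, hcK⟩ := hK.exists_forall_le' (f := fun x => (x - a) * g x) (a := 0)
    (fun x hx => ((continuousAt_id.sub continuousAt_const).mul
      (hgc x (((hmem x).1 hx).1.trans_lt hρ))).continuousWithinAt)
    (fun x hx => hg x (hε.trans_le ((hmem x).1 hx).2) (((hmem x).1 hx).1.trans_lt hρ))
  exact ⟨c, hc, fun x hε hρ => hcK x ((hmem x).2 ⟨hρ, hε⟩)⟩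

lemma tendsto_of_hasDerivWithinAt_Ici
    (hg : ∀ x, 0 < |x - a| → |x - a| < R → 0 < (x - a) * g x)
    (hgc : ∀ x, |x - a| < R → ContinuousAt g x) {t₀ : ℝ}
    (hU : ∀ t ∈ Ici t₀, HasDerivWithinAt U (-g (U t)) (Ici t₀) t) (h₀ : |U t₀ - a| < R) :
    Tendsto U atTop (𝓝 a) := by
  have hanti := antitoneOn_abs_sub_of_hasDerivWithinAt hg ordConnected_Ici isLeast_Ici hU h₀
  rw [Metric.tendsto_atTop]
  intro ε hε
  by_contra! hfar
  have hfar' : ∀ t ∈ Ici t₀, ε ≤ |U t - a| := fun t ht => by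
    obtain ⟨t', htt', hε'⟩ := hfar t
    exact hε'.trans (hanti ht (ht.trans htt') htt')
  obtain ⟨c, hc, hcK⟩ := exists_pos_le_sub_mul_of_le_abs_sub hg hgc hε h₀
  have hrate : ∀ t ∈ Ici t₀, c ≤ (U t - a) * g (U t) := fun t ht =>
    hcK (U t) (hfar' t ht) (hanti self_mem_Ici ht ht)
  set B : ℝ → ℝ := fun t => (U t₀ - a) ^ 2 - 2 * c * (t - t₀)
  have hB : ∀ τ, HasDerivAt B (-(2 * c)) τ := fun τ => by
    simpa using (((hasDerivAt_id τ).sub_const t₀).const_mul (2 * c)).const_sub ((U t₀ - a) ^ 2)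
  have hdecay : ∀ t ∈ Ici t₀, (U t - a) ^ 2 ≤ B t := fun t ht =>
    image_le_of_deriv_right_le_deriv_boundary
      (fun τ hτ => ((hU τ hτ.1).sub_const_sq).continuousWithinAt.mono Icc_subset_Ici_self)
      (fun τ hτ => ((hU τ hτ.1).sub_const_sq).mono (Ici_subset_Ici.2 hτ.1))
      (by simp [B]) (fun τ _ => (hB τ).continuousAt.continuousWithinAt)
      (fun τ _ => (hB τ).hasDerivWithinAt)
      (fun τ hτ => by linarith [hrate τ hτ.1]) ⟨ht, le_rfl⟩
  set t := t₀ + (U t₀ - a) ^ 2 / (2 * c) + 1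
  have ht : t₀ ≤ t := by linarith [show 0 ≤ (U t₀ - a) ^ 2 / (2 * c) by positivity]
  have hBt : B t = -(2 * c) := by simp only [B, t]; field_simp; ring
  linarith [hBt ▸ hdecay t ht, sq_nonneg (U t - a)]

end AttractingZero

theorem stmt17 (n : ℕ) (hn : 0 < n) (t0 : ℝ) (T : EReal) (hT : (t0 : EReal) < T)
    (U : ℝ → ℝ)
    (hU : ∀ t : ℝ, t0 ≤ t → (t : EReal) < T →
      HasDerivWithinAt U (-zetaR (U t)) {τ : ℝ | t0 ≤ τ ∧ (τ : EReal) < T} t)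
    (h0 : U t0 ∈ Set.Ioo (-(4 * (n : ℝ)) - 2) (-(4 * (n : ℝ)) + 2)) :
    (∀ t : ℝ, t0 ≤ t → (t : EReal) < T →
      U t ∈ Set.Ioo (-(4 * (n : ℝ)) - 2) (-(4 * (n : ℝ)) + 2)) ∧
    (T = ⊤ → Filter.Tendsto U Filter.atTop (nhds (-(4 * (n : ℝ))))) := by
  set a : ℝ := -(4 * (n : ℝ))
  have hg : ∀ x, 0 < |x - a| → |x - a| < 2 → 0 < (x - a) * zetaR x := by
    simpa only [a, sub_neg_eq_add] using fun x => add_mul_zetaR_pos hn (x := x)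
  have hball : ∀ x, x ∈ Ioo (a - 2) (a + 2) ↔ |x - a| < 2 := fun x => by
    rw [← Real.ball_eq_Ioo, Metric.mem_ball, Real.dist_eq]
  set S := {τ : ℝ | t0 ≤ τ ∧ (τ : EReal) < T}
  have hS : S.OrdConnected :=
    ⟨fun _ hx _ hy _ hz => ⟨hx.1.trans hz.1, (EReal.coe_le_coe_iff.2 hz.2).trans_lt hy.2⟩⟩
  have ht0 : IsLeast S t0 := ⟨⟨le_rfl, hT⟩, fun _ h => h.1⟩
  have h0' := (hball _).1 h0
  refine ⟨fun t ht hTt => (hball _).2 ?_, fun hT => ?_⟩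
  · exact (antitoneOn_abs_sub_of_hasDerivWithinAt hg hS ht0 (fun t ht => hU t ht.1 ht.2) h0'
      ht0.1 ⟨ht, hTt⟩ ht).trans_lt h0'
  · have hS : S = Ici t0 := by ext; simp [S, hT]
    have hn1 : (1 : ℝ) ≤ n := by exact_mod_cast hn
    refine tendsto_of_hasDerivWithinAt_Ici hg
      (fun x hx => continuousAt_zetaR (by linarith [(abs_lt.1 hx).2])) (fun t ht => ?_) h0'
    exact hS ▸ hU t ht (hT ▸ EReal.coe_lt_top t)
end
end
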